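/- arXiv:2203.07158 — 3 statements merged into one kernel-verified Lean document; each statement's English description precedes it below -/
import Mathlib

section
/- For every k > 1, IRC(C_k) ≥ (k−1)·2^{2k−1}. Consequently, since C_k has n = 2^k·(2^k + 2^{⌈log₂((k−1)/2)⌉+1} − 1) states and m = 2n transitions, deciding bisimilarity on the family (C_k) of deterministic two-action LTSs by partition refinement is Ω((m+n)·log n). -/
/-! ## Labeled transition systems with initial partition, partitions, refinement -/

structure LTS (S A : Type) where
  tr : S → A → S → Prop
  init : Finset (Finset S)

def inSameBlock {S : Type} (π : Finset (Finset S)) (s t : S) : Prop :=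
  ∃ B ∈ π, s ∈ B ∧ t ∈ B

def IsBlockPartition {S : Type} (π : Finset (Finset S)) : Prop :=
  ∅ ∉ π ∧ (∀ B ∈ π, ∀ B' ∈ π, B ≠ B' → Disjoint B B') ∧ ∀ s : S, ∃ B ∈ π, s ∈ B

def RefinesPart {S : Type} (π' π : Finset (Finset S)) : Prop :=
  ∀ B' ∈ π', ∃ B ∈ π, B' ⊆ B

def ReachesSet {S A : Type} (L : LTS S A) (s : S) (a : A) (U : Finset S) : Prop :=
  ∃ t ∈ U, L.tr s a t

def StableUnderBlock {S A : Type} (L : LTS S A) (V U : Finset S) : Prop :=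
  ∀ a : A, (∀ s ∈ V, ReachesSet L s a U) ∨ (∀ s ∈ V, ¬ ReachesSet L s a U)

def IsStablePartition {S A : Type} (L : LTS S A) (π : Finset (Finset S)) : Prop :=
  ∀ B ∈ π, ∀ C ∈ π, StableUnderBlock L B C

def SplitWitness {S A : Type} (L : LTS S A) (π : Finset (Finset S)) (s t : S) : Prop :=
  ∃ a s', L.tr s a s' ∧ ∀ t', L.tr t a t' → ¬ inSameBlock π s' t'

def ValidRefinement {S A : Type} (L : LTS S A) (π π' : Finset (Finset S)) : Prop :=
  RefinesPart π' π ∧ π' ≠ π ∧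
  ∀ s t : S, ¬ inSameBlock π' s t →
    (¬ inSameBlock π s t ∨ SplitWitness L π s t ∨ SplitWitness L π t s)

def ValidRefinementSeq {S A : Type} (L : LTS S A) (n : ℕ)
    (seq : ℕ → Finset (Finset S)) : Prop :=
  seq 0 = L.init ∧ (∀ i ≤ n, IsBlockPartition (seq i)) ∧
  (∀ i < n, ValidRefinement L (seq i) (seq (i + 1))) ∧
  IsStablePartition L (seq n)

/-! ## Refinement costs -/

def IRCstep {S : Type} [DecidableEq S] (π π' : Finset (Finset S)) : ℕ :=
  ∑ B ∈ π, (B.card - (π'.filter fun B' => B' ⊆ B).sup Finset.card)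

def IRCseq {S : Type} [DecidableEq S] (n : ℕ) (seq : ℕ → Finset (Finset S)) : ℕ :=
  ∑ i ∈ Finset.range n, IRCstep (seq i) (seq (i + 1))

noncomputable def IRC {S A : Type} [DecidableEq S] (L : LTS S A) : ℕ :=
  sInf {c | ∃ n seq, ValidRefinementSeq L n seq ∧ IRCseq n seq = c}

noncomputable def PIRC {S A : Type} (L : LTS S A) : ℕ :=
  sInf {n | ∃ seq, ValidRefinementSeq L n seq}

/-! ## Bisimulation, end structures, paths -/

def IsBisimulation {S A : Type} (L : LTS S A) (R : S → S → Prop) : Prop :=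
  Symmetric R ∧ (∀ s t, R s t → inSameBlock L.init s t) ∧
  ∀ s t a s', R s t → L.tr s a s' → ∃ t', L.tr t a t' ∧ R s' t'

def Bisimilar {S A : Type} (L : LTS S A) (s t : S) : Prop :=
  ∃ R, IsBisimulation L R ∧ R s t

def TransClosed {S A : Type} (L : LTS S A) (U : Set S) : Prop :=
  ∀ s ∈ U, ∀ a t, L.tr s a t → t ∈ U

def EndStructure {S A : Type} (L : LTS S A) (U : Set S) : Prop :=
  U.Nonempty ∧ TransClosed L U ∧
  ∀ V : Set S, TransClosed L V → (U ∩ V).Nonempty → U ⊆ V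

def PathTo {S A : Type} (L : LTS S A) : List A → S → S → Prop
  | [], s, t => s = t
  | a :: w, s, t => ∃ u, L.tr s a u ∧ PathTo L w u t

/-! ## The bisplitter B_k -/

def bsStep {k : ℕ} (σ : Fin k → Bool) (j : Fin (k - 1)) : Fin k → Bool :=
  if σ ⟨j.val + 1, by have := j.isLt; omega⟩ = false then σ
  else fun p => if p.val < j.val then σ p else if p.val = j.val then !(σ p) else false

def prefixBlock (k : ℕ) (p : List Bool) : Finset (Fin k → Bool) :=
  Finset.univ.filter fun σ => p <+: List.ofFn σ

def bisplitter (k : ℕ) : LTS (Fin k → Bool) (Fin (k - 1)) where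
  tr := fun s a t => t = bsStep s a
  init := {prefixBlock k [false], prefixBlock k [true]}

def zeroState (k : ℕ) : Fin k → Bool := fun _ => false

def oneState (k : ℕ) : Fin k → Bool := fun i => decide (i.val = 0)

/-- The bisplitter with the initial partition updated by the end structure oracle. -/
def bisplitter' (k : ℕ) : LTS (Fin k → Bool) (Fin (k - 1)) where
  tr := (bisplitter k).tr
  init := { {zeroState k}, prefixBlock k [false] \ {zeroState k},
            {oneState k}, prefixBlock k [true] \ {oneState k} }

/-! ## The layered bisplitter C_k -/

def treeHeight (k : ℕ) : ℕ := Nat.clog 2 (k / 2)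

abbrev TreeWord (h : ℕ) := Σ i : Fin (h + 1), Fin i.val → Bool

abbrev CState (k : ℕ) :=
  ((Fin k → Bool) × Fin (2 ^ k)) ⊕ ((Fin k → Bool) × TreeWord (treeHeight k))

instance instCStateDecEq (k : ℕ) : DecidableEq (CState k) := inferInstance

instance instCStateFintype (k : ℕ) : Fintype (CState k) := inferInstance

def rootWord (k : ℕ) : TreeWord (treeHeight k) := ⟨⟨0, Nat.succ_pos _⟩, Fin.elim0⟩

def binVal (w : List Bool) : ℕ := w.foldl (fun acc b => 2 * acc + b.toNat) 0

/-- The a_j-successor in B_k for j = lbl(v) = min(bin(v)+1, k-1) (1-based),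
    i.e. 0-based index min(bin(v), k-2). -/
def bkSucc (k : ℕ) (σ : Fin k → Bool) (v : List Bool) : Fin k → Bool :=
  if h : min (binVal v) (k - 2) < k - 1 then bsStep σ ⟨min (binVal v) (k - 2), h⟩ else σ

def cTr (k : ℕ) (s : CState k) (α : Bool) (t : CState k) : Prop :=
  match s with
  | Sum.inl (σ, ℓ) =>
      if h : ℓ.val + 1 < 2 ^ k then t = Sum.inl (σ, ⟨ℓ.val + 1, h⟩)
      else t = Sum.inr (σ, rootWord k)
  | Sum.inr (σ, w) =>
      if h : w.1.val < treeHeight k then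
        t = Sum.inr (σ, ⟨⟨w.1.val + 1, by omega⟩, Fin.snoc w.2 α⟩)
      else t = Sum.inl (bkSucc k σ (List.ofFn w.2 ++ [α]), ⟨0, by positivity⟩)

def firstBit {k : ℕ} (σ : Fin k → Bool) : Bool :=
  if h : 0 < k then σ ⟨0, h⟩ else false

def stakeBlock (k : ℕ) (ℓ : Fin (2 ^ k)) (b : Bool) : Finset (CState k) :=
  Finset.univ.filter fun s => ∃ σ : Fin k → Bool, firstBit σ = b ∧ s = Sum.inl (σ, ℓ)

def treeBlock (k : ℕ) : Finset (CState k) :=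
  Finset.univ.filter fun s => s.isRight = true

def cInit (k : ℕ) : Finset (Finset (CState k)) :=
  (Finset.univ.image fun p : Fin (2 ^ k) × Bool => stakeBlock k p.1 p.2) ∪ {treeBlock k}

def layered (k : ℕ) : LTS (CState k) Bool := ⟨cTr k, cInit k⟩

/-- The stake index of level 1. -/
def firstLevel (k : ℕ) : Fin (2 ^ k) := ⟨0, by positivity⟩

/-- The stake index of level 2^k. -/
def lastLevel (k : ℕ) : Fin (2 ^ k) :=
  ⟨2 ^ k - 1, Nat.sub_lt (by positivity) one_pos⟩

def mkWord {h : ℕ} (w : List Bool) (hw : w.length ≤ h) : TreeWord h :=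
  ⟨⟨w.length, Nat.lt_succ_of_le hw⟩, fun j => w.get j⟩

def endSet (k : ℕ) (σ₀ : Fin k → Bool) : Set (CState k) :=
  {s | (∃ ℓ, s = Sum.inl (σ₀, ℓ)) ∨ ∃ w, s = Sum.inr (σ₀, w)}

/-! ## End structure partition -/

noncomputable def bisimClass {S A : Type} [Fintype S] (L : LTS S A) (s : S) : Finset S :=
  (Set.toFinite {t | Bisimilar L s t}).toFinset

def ESUnion {S A : Type} (L : LTS S A) : Set S := ⋃₀ {U | EndStructure L U}

noncomputable def esPartition {S A : Type} [Fintype S] [DecidableEq S] (L : LTS S A) :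
    Finset (Finset S) :=
  ((Set.toFinite {B : Finset S | ∃ s ∈ ESUnion L, B = bisimClass L s}).toFinset ∪
      L.init.image fun B =>
        B \ (Set.toFinite {t | ∃ s ∈ ESUnion L, Bisimilar L s t}).toFinset) \ {∅}

/-! ## The sequential splitter D_n (states 0,…,n-1 standing for 1,…,n) -/

def seqSplitter (n : ℕ) : LTS (Fin n) Unit where
  tr := fun s _ t => if h : s.val + 1 < n then t = ⟨s.val + 1, h⟩ else t = s
  init := {Finset.univ.filter fun s => s.val + 1 < n,
           Finset.univ.filter fun s => s.val + 1 = n}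

def dPart (n i : ℕ) : Finset (Finset (Fin n)) :=
  {Finset.univ.filter fun s => s.val + i < n} ∪
    (Finset.univ.filter fun s : Fin n => n ≤ s.val + i).image fun s => {s}

/-! ## The fast parallel example G_k -/

def gLTS (k : ℕ) : LTS (Fin (2 ^ k) ⊕ Fin k) Unit where
  tr := fun s _ t => ∃ (i : Fin (2 ^ k)) (j : Fin k),
    s = Sum.inl i ∧ t = Sum.inr j ∧ Nat.testBit i.val j.val = true
  init := {Finset.univ.filter fun s => s.isLeft = true} ∪
    Finset.univ.image fun j : Fin k => ({Sum.inr j} : Finset (Fin (2 ^ k) ⊕ Fin k))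
/-! ### Development: basic partition lemmas -/

section PartitionBasics
variable {S : Type}

lemma inSameBlock_symm {π : Finset (Finset S)} {s t : S}
    (h : inSameBlock π s t) : inSameBlock π t s := by
  obtain ⟨B, hB, hs, ht⟩ := h; exact ⟨B, hB, ht, hs⟩

lemma inSameBlock_refl {π : Finset (Finset S)} (hπ : IsBlockPartition π) (s : S) :
    inSameBlock π s s := by
  obtain ⟨B, hB, hs⟩ := hπ.2.2 s; exact ⟨B, hB, hs, hs⟩

lemma block_eq_of_mem {π : Finset (Finset S)} (hπ : IsBlockPartition π)
    {B B' : Finset S} (hB : B ∈ π) (hB' : B' ∈ π) {t : S}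
    (h1 : t ∈ B) (h2 : t ∈ B') : B = B' := by
  by_contra hne
  exact (Finset.disjoint_left.1 (hπ.2.1 B hB B' hB' hne)) h1 h2

lemma inSameBlock_trans {π : Finset (Finset S)} (hπ : IsBlockPartition π) {s t u : S}
    (h1 : inSameBlock π s t) (h2 : inSameBlock π t u) : inSameBlock π s u := by
  obtain ⟨B, hB, hs, ht⟩ := h1
  obtain ⟨B', hB', ht', hu⟩ := h2
  exact ⟨B, hB, hs, (block_eq_of_mem hπ hB hB' ht ht') ▸ hu⟩

lemma mem_same_of_inSameBlock {π : Finset (Finset S)} (hπ : IsBlockPartition π)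
    {B : Finset S} (hB : B ∈ π) {s t : S} (hs : s ∈ B)
    (h : inSameBlock π s t) : t ∈ B := by
  obtain ⟨B', hB', hs', ht'⟩ := h
  exact (block_eq_of_mem hπ hB hB' hs hs') ▸ ht'

lemma inSameBlock_of_refines {π π' : Finset (Finset S)} (h : RefinesPart π' π) {s t : S} :
    inSameBlock π' s t → inSameBlock π s t := by
  rintro ⟨B', hB', hs, ht⟩
  obtain ⟨B, hB, hsub⟩ := h B' hB'
  exact ⟨B, hB, hsub hs, hsub ht⟩

end PartitionBasics

/-! ### The successor function of the layered bisplitter -/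

def csucc {k : ℕ} (s : CState k) (α : Bool) : CState k :=
  match s with
  | Sum.inl (σ, ℓ) =>
      if h : ℓ.val + 1 < 2 ^ k then Sum.inl (σ, ⟨ℓ.val + 1, h⟩)
      else Sum.inr (σ, rootWord k)
  | Sum.inr (σ, w) =>
      if h : w.1.val < treeHeight k then
        Sum.inr (σ, ⟨⟨w.1.val + 1, by omega⟩, Fin.snoc w.2 α⟩)
      else Sum.inl (bkSucc k σ (List.ofFn w.2 ++ [α]), ⟨0, by positivity⟩)

lemma cTr_iff {k : ℕ} (s : CState k) (α : Bool) (t : CState k) :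
    cTr k s α t ↔ t = csucc s α := by
  rcases s with ⟨σ, ℓ⟩ | ⟨σ, w⟩ <;> simp only [cTr, csucc] <;> split_ifs <;> rfl

lemma layered_tr_iff {k : ℕ} (s : CState k) (α : Bool) (t : CState k) :
    (layered k).tr s α t ↔ t = csucc s α := cTr_iff s α t

/-! ### First difference index -/

section FD
variable {k : ℕ}

noncomputable def fd (u v : Fin k → Bool) : ℕ :=
  if h : u = v then k
  else ((Finset.univ.filter fun i : Fin k => u i ≠ v i).min'
    (by
      obtain ⟨i, hi⟩ := Function.ne_iff.1 h
      exact ⟨i, Finset.mem_filter.2 ⟨Finset.mem_univ _, hi⟩⟩)).val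

lemma fd_spec {u v : Fin k → Bool} (h : u ≠ v) :
    ∃ i : Fin k, i.val = fd u v ∧ u i ≠ v i := by
  have hne : (Finset.univ.filter fun i : Fin k => u i ≠ v i).Nonempty := by
    obtain ⟨i, hi⟩ := Function.ne_iff.1 h
    exact ⟨i, Finset.mem_filter.2 ⟨Finset.mem_univ _, hi⟩⟩
  refine ⟨(Finset.univ.filter fun i : Fin k => u i ≠ v i).min' hne, ?_, ?_⟩
  · simp only [fd, dif_neg h]
  · have := Finset.min'_mem _ hne
    rw [Finset.mem_filter] at this
    exact this.2

lemma fd_lt (u v : Fin k → Bool) (h : u ≠ v) : fd u v < k := by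
  obtain ⟨i, hiv, _⟩ := fd_spec h
  have := i.isLt
  omega

lemma fd_le_of_diff {u v : Fin k → Bool} {i : Fin k} (h : u i ≠ v i) :
    fd u v ≤ i.val := by
  have hne : u ≠ v := fun he => h (by rw [he])
  have hmem : i ∈ Finset.univ.filter fun j : Fin k => u j ≠ v j :=
    Finset.mem_filter.2 ⟨Finset.mem_univ i, h⟩
  have hle := Finset.min'_le _ i hmem
  calc fd u v = ((Finset.univ.filter fun j : Fin k => u j ≠ v j).min' ⟨i, hmem⟩).val := by
        simp only [fd, dif_neg hne]
    _ ≤ i.val := hle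

lemma fd_agree {u v : Fin k → Bool} {i : Fin k} (h : i.val < fd u v) : u i = v i := by
  by_contra hd
  exact absurd (fd_le_of_diff hd) (by omega)

lemma fd_eq {u v : Fin k → Bool} {d : ℕ} (hd : d < k)
    (hag : ∀ i : Fin k, i.val < d → u i = v i) (hdiff : u ⟨d, hd⟩ ≠ v ⟨d, hd⟩) :
    fd u v = d := by
  have h1 : fd u v ≤ d := fd_le_of_diff hdiff
  have hne : u ≠ v := fun he => hdiff (by rw [he])
  obtain ⟨i, hiv, hid⟩ := fd_spec hne
  have h2 : ¬ i.val < d := fun hlt => hid (hag i hlt)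
  omega

lemma fd_pos {u v : Fin k → Bool} (hk : 0 < k) (h0 : u ⟨0, hk⟩ = v ⟨0, hk⟩) :
    0 < fd u v := by
  by_cases hne : u = v
  · simp only [fd, dif_pos hne]; exact hk
  · rcases Nat.eq_zero_or_pos (fd u v) with h | h
    · obtain ⟨i, hiv, hid⟩ := fd_spec hne
      have : i = ⟨0, hk⟩ := Fin.ext (by simp only [Fin.val_mk]; omega)
      rw [this] at hid
      exact absurd h0 hid
    · exact h

end FD

/-! ### Images of pairs under bsStep -/

section IMG
variable {k : ℕ}

def ft (z : Fin k → Bool) (J : ℕ) : Fin k → Bool :=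
  fun p => if p.val < J then z p else if p.val = J then !(z p) else false

lemma bsStep_eq (σ : Fin k → Bool) (j : Fin (k - 1)) :
    bsStep σ j = if σ ⟨j.val + 1, by have := j.isLt; omega⟩ = false then σ
      else ft σ j.val := by
  rw [bsStep]
  split_ifs with h
  · rfl
  · funext p; rw [ft]

lemma ft_agree_low (z : Fin k → Bool) (J : ℕ) (p : Fin k) (h : p.val < J) :
    ft z J p = z p := if_pos h

lemma ft_eq_ft {u v : Fin k → Bool} (J : ℕ)
    (h : ∀ p : Fin k, p.val ≤ J → u p = v p) : ft u J = ft v J := by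
  funext p
  rw [ft, ft]
  split_ifs with h1 h2
  · exact h p (by omega)
  · rw [h p (by omega)]
  · rfl

/-- Trichotomy for images of a pair under a bisplitter action. -/
lemma img_tri (u v : Fin k → Bool) (j : Fin (k - 1)) :
    bsStep u j = bsStep v j ∨ (bsStep u j = u ∧ bsStep v j = v) ∨
    (bsStep u j ≠ bsStep v j ∧
      ∀ m : Fin k, m.val + 1 < fd u v → bsStep u j m = u m ∧ bsStep v j m = u m) := by
  have hJ1 : j.val + 1 < k := by have := j.isLt; omega
  set i1 : Fin k := ⟨j.val + 1, hJ1⟩ with hi1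
  by_cases heq : bsStep u j = bsStep v j
  · exact Or.inl heq
  rcases hu : u i1 <;> rcases hv : v i1
  · -- both false
    exact Or.inr (Or.inl ⟨by rw [bsStep_eq, if_pos hu], by rw [bsStep_eq, if_pos hv]⟩)
  · -- u false, v true : images (u, ft v J)
    refine Or.inr (Or.inr ⟨heq, ?_⟩)
    have hfd : fd u v ≤ j.val + 1 := fd_le_of_diff (i := i1) (by rw [hu, hv]; simp)
    intro m hm
    have hmJ : m.val < j.val := by omega
    constructor
    · rw [bsStep_eq, if_pos hu]
    · rw [bsStep_eq, if_neg (by rw [hv]; simp), ft_agree_low _ _ _ hmJ]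
      exact (fd_agree (by omega)).symm
  · -- u true, v false
    refine Or.inr (Or.inr ⟨heq, ?_⟩)
    have hfd : fd u v ≤ j.val + 1 := fd_le_of_diff (i := i1) (by rw [hu, hv]; simp)
    intro m hm
    have hmJ : m.val < j.val := by omega
    constructor
    · rw [bsStep_eq, if_neg (by rw [hu]; simp), ft_agree_low _ _ _ hmJ]
    · rw [bsStep_eq, if_pos hv]
      exact (fd_agree (by omega)).symm
  · -- both true : images (ft u J, ft v J); since unequal, fd ≤ J
    refine Or.inr (Or.inr ⟨heq, ?_⟩)
    have hfd : fd u v ≤ j.val := by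
      by_contra hgt
      push_neg at hgt
      apply heq
      rw [bsStep_eq, if_neg (by rw [hu]; simp), bsStep_eq, if_neg (by rw [hv]; simp)]
      exact ft_eq_ft j.val (fun p hp => fd_agree (by omega))
    intro m hm
    have hmJ : m.val < j.val := by omega
    constructor
    · rw [bsStep_eq, if_neg (by rw [hu]; simp), ft_agree_low _ _ _ hmJ]
    · rw [bsStep_eq, if_neg (by rw [hv]; simp), ft_agree_low _ _ _ hmJ]
      exact (fd_agree (by omega)).symm

end IMG
/-! ### Separation propagation along the layered bisplitter -/

section SeqCtx
variable {k : ℕ}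

def SepSt (seq : ℕ → Finset (Finset (CState k))) (i : ℕ) (ℓ : Fin (2 ^ k))
    (u v : Fin k → Bool) : Prop :=
  ¬ inSameBlock (seq i) (Sum.inl (u, ℓ)) (Sum.inl (v, ℓ))

def SepTr (seq : ℕ → Finset (Finset (CState k))) (i : ℕ) (w : TreeWord (treeHeight k))
    (u v : Fin k → Bool) : Prop :=
  ¬ inSameBlock (seq i) (Sum.inr (u, w)) (Sum.inr (v, w))

lemma csucc_stake_lt {σ : Fin k → Bool} {ℓ : Fin (2 ^ k)} (h : ℓ.val + 1 < 2 ^ k)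
    (α : Bool) : csucc (Sum.inl (σ, ℓ)) α = Sum.inl (σ, ⟨ℓ.val + 1, h⟩) := by
  simp [csucc, dif_pos h]

lemma csucc_stake_last {σ : Fin k → Bool} {ℓ : Fin (2 ^ k)} (h : ¬ ℓ.val + 1 < 2 ^ k)
    (α : Bool) : csucc (Sum.inl (σ, ℓ)) α = Sum.inr (σ, rootWord k) := by
  simp [csucc, dif_neg h]

lemma csucc_tree_lt {σ : Fin k → Bool} {w : TreeWord (treeHeight k)}
    (h : w.1.val < treeHeight k) (α : Bool) :
    csucc (Sum.inr (σ, w) : CState k) α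
      = Sum.inr (σ, ⟨⟨w.1.val + 1, by omega⟩, Fin.snoc w.2 α⟩) := by
  simp [csucc, dif_pos h]

lemma csucc_leaf {σ : Fin k → Bool} {w : TreeWord (treeHeight k)}
    (h : ¬ w.1.val < treeHeight k) (α : Bool) :
    csucc (Sum.inr (σ, w) : CState k) α
      = Sum.inl (bkSucc k σ (List.ofFn w.2 ++ [α]), ⟨0, by positivity⟩) := by
  simp [csucc, dif_neg h]

lemma inl_mem_stakeBlock_iff {u : Fin k → Bool} {m ℓ : Fin (2 ^ k)} {b : Bool} :
    (Sum.inl (u, m) : CState k) ∈ stakeBlock k ℓ b ↔ firstBit u = b ∧ m = ℓ := by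
  simp only [stakeBlock, Finset.mem_filter, Finset.mem_univ, true_and]
  constructor
  · rintro ⟨σ, hb, heq⟩
    obtain ⟨h1, h2⟩ := Prod.mk.injEq .. ▸ Sum.inl.injEq .. ▸ heq
    exact ⟨by rw [← hb, h1], h2⟩
  · rintro ⟨hb, hm⟩
    exact ⟨u, hb, by rw [hm]⟩

lemma inr_mem_treeBlock {σ : Fin k → Bool} {w : TreeWord (treeHeight k)} :
    (Sum.inr (σ, w) : CState k) ∈ treeBlock k := by
  simp [treeBlock]

lemma inl_not_mem_treeBlock {p : (Fin k → Bool) × Fin (2 ^ k)} :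
    (Sum.inl p : CState k) ∉ treeBlock k := by
  simp [treeBlock]

lemma mem_cInit_iff {B : Finset (CState k)} :
    B ∈ cInit k ↔ (∃ ℓ b, B = stakeBlock k ℓ b) ∨ B = treeBlock k := by
  simp only [cInit, Finset.mem_union, Finset.mem_image, Finset.mem_univ, true_and,
    Finset.mem_singleton]
  constructor
  · rintro (⟨p, hp⟩ | h)
    · exact Or.inl ⟨p.1, p.2, hp.symm⟩
    · exact Or.inr h
  · rintro (⟨ℓ, b, h⟩ | h)
    · exact Or.inl ⟨⟨ℓ, b⟩, h.symm⟩
    · exact Or.inr h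

variable (hk : 1 < k) {n : ℕ} {seq : ℕ → Finset (Finset (CState k))}
  (hs : ValidRefinementSeq (layered k) n seq)

section
include hs

lemma seq_zero_eq : seq 0 = cInit k := hs.1

lemma init_same_stake {u v : Fin k → Bool} (h : firstBit u = firstBit v)
    (ℓ : Fin (2 ^ k)) :
    inSameBlock (seq 0) (Sum.inl (u, ℓ) : CState k) (Sum.inl (v, ℓ)) := by
  rw [seq_zero_eq hs]
  refine ⟨stakeBlock k ℓ (firstBit u), ?_, ?_, ?_⟩
  · exact mem_cInit_iff.2 (Or.inl ⟨ℓ, firstBit u, rfl⟩)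
  · exact inl_mem_stakeBlock_iff.2 ⟨rfl, rfl⟩
  · exact inl_mem_stakeBlock_iff.2 ⟨h.symm, rfl⟩

lemma init_same_tree (u v : Fin k → Bool) (w w' : TreeWord (treeHeight k)) :
    inSameBlock (seq 0) (Sum.inr (u, w) : CState k) (Sum.inr (v, w')) := by
  rw [seq_zero_eq hs]
  exact ⟨treeBlock k, mem_cInit_iff.2 (Or.inr rfl), inr_mem_treeBlock, inr_mem_treeBlock⟩

lemma init_sep_firstBit {u v : Fin k → Bool} {ℓ m : Fin (2 ^ k)}
    (h : firstBit u ≠ firstBit v) :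
    ¬ inSameBlock (seq 0) (Sum.inl (u, ℓ) : CState k) (Sum.inl (v, m)) := by
  rw [seq_zero_eq hs]
  rintro ⟨B, hB, hu, hv⟩
  rcases mem_cInit_iff.1 hB with ⟨ℓ', b, rfl⟩ | rfl
  · exact h ((inl_mem_stakeBlock_iff.1 hu).1.trans (inl_mem_stakeBlock_iff.1 hv).1.symm)
  · exact inl_not_mem_treeBlock hu

lemma sep_mono {i j : ℕ} (hij : i ≤ j) (hj : j ≤ n) {s t : CState k}
    (h : ¬ inSameBlock (seq i) s t) : ¬ inSameBlock (seq j) s t := by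
  induction j, hij using Nat.le_induction with
  | base => exact h
  | succ j hij ih =>
    intro hcon
    exact ih (by omega) (inSameBlock_of_refines (hs.2.2.1 j (by omega)).1 hcon)

lemma newly_sep {i : ℕ} (hi : i < n) {s t : CState k}
    (hsame : inSameBlock (seq i) s t)
    (hsep : ¬ inSameBlock (seq (i + 1)) s t) :
    ∃ α, ¬ inSameBlock (seq i) (csucc s α) (csucc t α) := by
  rcases (hs.2.2.1 i hi).2.2 s t hsep with h | ⟨a, s', htr, hall⟩ | ⟨a, t', htr, hall⟩
  · exact absurd hsame h
  · rw [layered_tr_iff] at htr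
    subst htr
    exact ⟨a, hall _ ((layered_tr_iff _ _ _).2 rfl)⟩
  · rw [layered_tr_iff] at htr
    subst htr
    exact ⟨a, fun hcon =>
      hall _ ((layered_tr_iff _ _ _).2 rfl) (inSameBlock_symm hcon)⟩

/-- Separation at a stake level propagates (backwards in time) to all later levels. -/
lemma sep_up : ∀ i, i ≤ n → ∀ (m : Fin (2 ^ k)) (u v : Fin k → Bool),
    SepSt seq i m u v → ∀ m' : Fin (2 ^ k), m.val ≤ m'.val →
    ∃ j ≤ i, SepSt seq j m' u v := by
  intro i
  induction i with
  | zero =>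
    intro _ m u v hsep m' _
    refine ⟨0, le_rfl, ?_⟩
    have hfb : firstBit u ≠ firstBit v := by
      intro hfb
      exact hsep (init_same_stake hs hfb m)
    exact init_sep_firstBit hs hfb
  | succ i ih =>
    intro hin m u v hsep m' hmm
    by_cases hmeq : m = m'
    · exact ⟨i + 1, le_rfl, hmeq ▸ hsep⟩
    · by_cases hprev : SepSt seq i m u v
      · obtain ⟨j, hj, hsj⟩ := ih (by omega) m u v hprev m' hmm
        exact ⟨j, by omega, hsj⟩
      · have hsame := not_not.1 hprev
        obtain ⟨α, hsα⟩ := newly_sep hs (by omega) hsame hsep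
        by_cases hlast : m.val + 1 < 2 ^ k
        · rw [csucc_stake_lt hlast, csucc_stake_lt hlast] at hsα
          have hm1 : (⟨m.val + 1, hlast⟩ : Fin (2 ^ k)).val ≤ m'.val := by
            have : m.val < m'.val := lt_of_le_of_ne hmm (fun hc => hmeq (Fin.ext hc))
            simp only [Fin.val_mk]; omega
          obtain ⟨j, hj, hsj⟩ := ih (by omega) _ u v hsα m' hm1
          exact ⟨j, by omega, hsj⟩
        · exact absurd (Fin.ext (by have := m'.isLt; omega) : m = m') hmeq

end
end SeqCtx
/-! ### The chain lemma -/

section ChainCtx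
variable {k : ℕ}

lemma firstBit_eq_bit0 {σ : Fin k → Bool} (hpos : 0 < k) : firstBit σ = σ ⟨0, hpos⟩ :=
  dif_pos hpos

lemma bkSucc_eq_bsStep (hk : 1 < k) (σ : Fin k → Bool) (v : List Bool) :
    bkSucc k σ v = bsStep σ ⟨min (binVal v) (k - 2), by
      have := min_le_right (binVal v) (k - 2); omega⟩ := by
  rw [bkSucc, dif_pos]

variable (hk : 1 < k) {n : ℕ} {seq : ℕ → Finset (Finset (CState k))}
  (hs : ValidRefinementSeq (layered k) n seq)

include hk hs

lemma chain : ∀ i, i ≤ n → ∀ u v : Fin k → Bool, 0 < fd u v →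
    ((∃ ℓ, SepSt seq i ℓ u v) ∨ (∃ w, SepTr seq i w u v)) →
    ∃ a b : Fin k → Bool, a ≠ b ∧
      (∀ m : Fin k, m.val + 1 < fd u v → a m = u m ∧ b m = u m) ∧
      ∃ j ≤ i, SepSt seq j (firstLevel k) a b := by
  intro i
  induction i using Nat.strong_induction_on with
  | _ i ih =>
  intro hin u v hfd hloc
  have kpos : 0 < k := by omega
  by_cases huv : u = v
  · exfalso
    rcases hloc with ⟨ℓ, hsep⟩ | ⟨w, hsep⟩
    · exact hsep (huv ▸ inSameBlock_refl (hs.2.1 i hin) _)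
    · exact hsep (huv ▸ inSameBlock_refl (hs.2.1 i hin) _)
  have hfb : firstBit u = firstBit v := by
    rw [firstBit_eq_bit0 kpos, firstBit_eq_bit0 kpos]
    exact fd_agree (by simpa using hfd)
  rcases i with _ | i'
  · exfalso
    rcases hloc with ⟨ℓ, hsep⟩ | ⟨w, hsep⟩
    · exact hsep (init_same_stake hs hfb ℓ)
    · exact hsep (init_same_tree hs u v w w)
  · have hi'n : i' < n := by omega
    have hi'le : i' ≤ n := by omega
    have lift : (∃ a b : Fin k → Bool, a ≠ b ∧
        (∀ m : Fin k, m.val + 1 < fd u v → a m = u m ∧ b m = u m) ∧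
        ∃ j ≤ i', SepSt seq j (firstLevel k) a b) →
        ∃ a b : Fin k → Bool, a ≠ b ∧
        (∀ m : Fin k, m.val + 1 < fd u v → a m = u m ∧ b m = u m) ∧
        ∃ j ≤ i' + 1, SepSt seq j (firstLevel k) a b := by
      rintro ⟨a, b, h1, h2, j, hj, h3⟩
      exact ⟨a, b, h1, h2, j, by omega, h3⟩
    rcases hloc with ⟨ℓ, hsep⟩ | ⟨w, hsep⟩
    · by_cases hprev : SepSt seq i' ℓ u v
      · exact lift (ih i' (by omega) hi'le u v hfd (Or.inl ⟨ℓ, hprev⟩))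
      · obtain ⟨α, hsα⟩ := newly_sep hs hi'n (not_not.1 hprev) hsep
        by_cases hlast : ℓ.val + 1 < 2 ^ k
        · rw [csucc_stake_lt hlast, csucc_stake_lt hlast] at hsα
          exact lift (ih i' (by omega) hi'le u v hfd (Or.inl ⟨_, hsα⟩))
        · rw [csucc_stake_last hlast, csucc_stake_last hlast] at hsα
          exact lift (ih i' (by omega) hi'le u v hfd (Or.inr ⟨_, hsα⟩))
    · by_cases hprev : SepTr seq i' w u v
      · exact lift (ih i' (by omega) hi'le u v hfd (Or.inr ⟨w, hprev⟩))
      · obtain ⟨α, hsα⟩ := newly_sep hs hi'n (not_not.1 hprev) hsep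
        by_cases hlt : w.1.val < treeHeight k
        · rw [csucc_tree_lt hlt α, csucc_tree_lt hlt α] at hsα
          exact lift (ih i' (by omega) hi'le u v hfd (Or.inr ⟨_, hsα⟩))
        · rw [csucc_leaf hlt α, csucc_leaf hlt α] at hsα
          rw [bkSucc_eq_bsStep hk u _, bkSucc_eq_bsStep hk v _] at hsα
          rcases img_tri u v ⟨min (binVal (List.ofFn w.2 ++ [α])) (k - 2), by
              have := min_le_right (binVal (List.ofFn w.2 ++ [α])) (k - 2); omega⟩
            with heq | ⟨hu1, hv1⟩ | ⟨hne, hag⟩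
          · exact absurd (heq ▸ inSameBlock_refl (hs.2.1 i' hi'le) _) hsα
          · rw [hu1, hv1] at hsα
            exact lift (ih i' (by omega) hi'le u v hfd (Or.inl ⟨_, hsα⟩))
          · exact ⟨_, _, hne, hag, i', by omega, hsα⟩

end ChainCtx
/-! ### Prefix blocks -/

section PB
variable {k : ℕ}

def pb (ℓ : Fin (2 ^ k)) (d : ℕ) (ρ : Fin k → Bool) : Finset (CState k) :=
  (Finset.univ.filter fun σ : Fin k → Bool => ∀ i : Fin k, i.val < d → σ i = ρ i).image
    (fun σ => Sum.inl (σ, ℓ))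

lemma mem_pb_iff {s : CState k} {ℓ : Fin (2 ^ k)} {d : ℕ} {ρ : Fin k → Bool} :
    s ∈ pb ℓ d ρ ↔ ∃ σ, (∀ i : Fin k, i.val < d → σ i = ρ i) ∧ s = Sum.inl (σ, ℓ) := by
  simp only [pb, Finset.mem_image, Finset.mem_filter, Finset.mem_univ, true_and]
  constructor
  · rintro ⟨σ, h1, h2⟩; exact ⟨σ, h1, h2.symm⟩
  · rintro ⟨σ, h1, h2⟩; exact ⟨σ, h1, h2.symm⟩

lemma inl_mem_pb_iff {σ : Fin k → Bool} {m ℓ : Fin (2 ^ k)} {d : ℕ} {ρ : Fin k → Bool} :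
    (Sum.inl (σ, m) : CState k) ∈ pb ℓ d ρ ↔ (∀ i : Fin k, i.val < d → σ i = ρ i) ∧ m = ℓ := by
  rw [mem_pb_iff]
  constructor
  · rintro ⟨τ, h1, h2⟩
    rw [Sum.inl.injEq, Prod.mk.injEq] at h2
    exact ⟨h2.1 ▸ h1, h2.2⟩
  · rintro ⟨h1, h2⟩; exact ⟨σ, h1, by rw [h2]⟩

lemma pb_card {ℓ : Fin (2 ^ k)} {d : ℕ} (hd : d ≤ k) (ρ : Fin k → Bool) :
    (pb ℓ d ρ).card = 2 ^ (k - d) := by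
  rw [pb, Finset.card_image_of_injective _ (fun a b hab => by
    rw [Sum.inl.injEq, Prod.mk.injEq] at hab; exact hab.1)]
  rw [show (2 : ℕ) ^ (k - d) = Fintype.card (Fin (k - d) → Bool) by
    simp [Fintype.card_fun]]
  rw [← Finset.card_univ]
  refine Finset.card_nbij' (fun σ => fun j : Fin (k - d) => σ ⟨d + j.val, by omega⟩)
    (fun τ => fun i : Fin k => if h : i.val < d then ρ i else τ ⟨i.val - d, by omega⟩)
    (fun σ _ => Finset.mem_univ _) ?_ ?_ ?_
  · intro τ _
    simp only [Finset.mem_coe, Finset.mem_filter, Finset.mem_univ, true_and]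
    intro i hi
    rw [dif_pos hi]
  · intro σ hσ
    simp only [Finset.mem_coe, Finset.mem_filter, Finset.mem_univ, true_and] at hσ
    funext i
    dsimp only
    by_cases hi : i.val < d
    · rw [dif_pos hi]; exact (hσ i hi).symm
    · rw [dif_neg hi]
      congr 1
      exact Fin.ext (by simp only [Fin.val_mk]; omega)
  · intro τ _
    funext j
    dsimp only
    rw [dif_neg (by have := j.isLt; omega)]
    congr 1
    exact Fin.ext (by simp only [Fin.val_mk]; omega)

lemma pb_nonempty (ℓ : Fin (2 ^ k)) (d : ℕ) (ρ : Fin k → Bool) :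
    (pb ℓ d ρ).Nonempty :=
  ⟨Sum.inl (ρ, ℓ), inl_mem_pb_iff.2 ⟨fun _ _ => rfl, rfl⟩⟩

lemma pb_eq_of_agree {ℓ : Fin (2 ^ k)} {d : ℕ} {ρ ρ' : Fin k → Bool}
    (h : ∀ i : Fin k, i.val < d → ρ i = ρ' i) : pb ℓ d ρ = pb ℓ d ρ' := by
  ext s
  rw [mem_pb_iff, mem_pb_iff]
  constructor
  · rintro ⟨σ, h1, h2⟩; exact ⟨σ, fun i hi => (h1 i hi).trans (h i hi), h2⟩
  · rintro ⟨σ, h1, h2⟩; exact ⟨σ, fun i hi => (h1 i hi).trans (h i hi).symm, h2⟩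

lemma pb_one_eq_stakeBlock (hpos : 0 < k) (ℓ : Fin (2 ^ k)) (ρ : Fin k → Bool) :
    pb ℓ 1 ρ = stakeBlock k ℓ (firstBit ρ) := by
  ext s
  rw [mem_pb_iff]
  simp only [stakeBlock, Finset.mem_filter, Finset.mem_univ, true_and]
  constructor
  · rintro ⟨σ, h1, h2⟩
    refine ⟨σ, ?_, h2⟩
    rw [firstBit_eq_bit0 hpos, firstBit_eq_bit0 hpos]
    exact h1 _ (by simp)
  · rintro ⟨σ, h1, h2⟩
    refine ⟨σ, ?_, h2⟩
    intro i hi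
    have : i = ⟨0, hpos⟩ := Fin.ext (by simp only [Fin.val_mk]; omega)
    rw [this]
    exact ((firstBit_eq_bit0 hpos).symm.trans h1).trans (firstBit_eq_bit0 hpos)

lemma fd_ge_of_agree {u v : Fin k → Bool} {c : ℕ}
    (h : ∀ i : Fin k, i.val < c → u i = v i) (hne : u ≠ v) : c ≤ fd u v := by
  obtain ⟨i, hiv, hid⟩ := fd_spec hne
  have : ¬ i.val < c := fun hc => hid (h i hc)
  omega

end PB
/-! ### The prefix-partition invariant -/

def StakePref {k : ℕ} (π : Finset (Finset (CState k))) : Prop :=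
  ∀ B ∈ π, (∃ (ℓ : Fin (2 ^ k)) (d : ℕ) (ρ : Fin k → Bool),
    1 ≤ d ∧ d ≤ k ∧ B = pb ℓ d ρ) ∨ B ⊆ treeBlock k

section Inv
variable {k : ℕ} (hk : 1 < k) {n : ℕ} {seq : ℕ → Finset (Finset (CState k))}
  (hs : ValidRefinementSeq (layered k) n seq)
include hk hs

lemma no_deep_split {i : ℕ} (hi : i < n) {ℓ : Fin (2 ^ k)} {d : ℕ} (hd1 : 1 ≤ d)
    {ρ : Fin k → Bool} (hB : pb ℓ d ρ ∈ seq i)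
    {x y : Fin k → Bool} (hx : ∀ j : Fin k, j.val < d → x j = ρ j)
    (hy : ∀ j : Fin k, j.val < d → y j = ρ j)
    (hxy : ∀ j : Fin k, j.val < d + 1 → x j = y j) :
    inSameBlock (seq (i + 1)) (Sum.inl (x, ℓ) : CState k) (Sum.inl (y, ℓ)) := by
  by_contra hsep
  by_cases hxyeq : x = y
  · exact hsep (hxyeq ▸ inSameBlock_refl (hs.2.1 (i + 1) (by omega)) _)
  have hfd : d + 1 ≤ fd x y := fd_ge_of_agree hxy hxyeq
  have hsame : inSameBlock (seq i) (Sum.inl (x, ℓ) : CState k) (Sum.inl (y, ℓ)) :=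
    ⟨pb ℓ d ρ, hB, inl_mem_pb_iff.2 ⟨hx, rfl⟩, inl_mem_pb_iff.2 ⟨hy, rfl⟩⟩
  obtain ⟨α, hsα⟩ := newly_sep hs hi hsame hsep
  have hloc : (∃ m, SepSt seq i m x y) ∨ (∃ w, SepTr seq i w x y) := by
    by_cases hlast : ℓ.val + 1 < 2 ^ k
    · rw [csucc_stake_lt hlast, csucc_stake_lt hlast] at hsα
      exact Or.inl ⟨_, hsα⟩
    · rw [csucc_stake_last hlast, csucc_stake_last hlast] at hsα
      exact Or.inr ⟨_, hsα⟩
  obtain ⟨a, b, hab, hag, j, hj, hsj⟩ :=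
    chain hk hs i (le_of_lt hi) x y (by omega) hloc
  obtain ⟨j', hj', hsj'⟩ := sep_up hs j (by omega) (firstLevel k) a b hsj ℓ
    (by simp [firstLevel])
  have hsep_i : SepSt seq i ℓ a b := sep_mono hs (by omega) (le_of_lt hi) hsj'
  have haB : (Sum.inl (a, ℓ) : CState k) ∈ pb ℓ d ρ :=
    inl_mem_pb_iff.2 ⟨fun m hm => ((hag m (by omega)).1).trans (hx m hm), rfl⟩
  have hbB : (Sum.inl (b, ℓ) : CState k) ∈ pb ℓ d ρ :=
    inl_mem_pb_iff.2 ⟨fun m hm => ((hag m (by omega)).2).trans (hx m hm), rfl⟩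
  exact hsep_i ⟨pb ℓ d ρ, hB, haB, hbB⟩

lemma invariant : ∀ i ≤ n, StakePref (seq i) := by
  have kpos : 0 < k := by omega
  intro i
  induction i with
  | zero =>
    intro _ B hB
    rw [seq_zero_eq hs] at hB
    rcases mem_cInit_iff.1 hB with ⟨ℓ, b, rfl⟩ | rfl
    · left
      refine ⟨ℓ, 1, fun _ => b, le_rfl, by omega, ?_⟩
      have hfb : firstBit (fun _ : Fin k => b) = b := firstBit_eq_bit0 kpos
      rw [pb_one_eq_stakeBlock kpos, hfb]
    · exact Or.inr subset_rfl
  | succ i ihp =>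
    intro hin B' hB'
    have ih := ihp (by omega)
    obtain ⟨B, hB, hsub⟩ := (hs.2.2.1 i (by omega)).1 B' hB'
    rcases ih B hB with ⟨ℓ, d, ρ, hd1, hdk, rfl⟩ | htree
    · left
      by_cases hBB : B' = pb ℓ d ρ
      · exact ⟨ℓ, d, ρ, hd1, hdk, hBB⟩
      have hne : B'.Nonempty := Finset.nonempty_iff_ne_empty.2
        (fun h => (hs.2.1 (i + 1) hin).1 (h ▸ hB'))
      obtain ⟨x0, hx0⟩ := hne
      obtain ⟨σ0, hσ0, rfl⟩ := mem_pb_iff.1 (hsub hx0)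
      have hdlt : d < k := by
        rcases Nat.lt_or_ge d k with h | h
        · exact h
        · exfalso
          apply hBB
          have hd : d = k := by omega
          apply Finset.eq_of_subset_of_card_le hsub
          rw [pb_card hdk]
          have : (0 : ℕ) < B'.card := Finset.card_pos.2 ⟨_, hx0⟩
          have : k - d = 0 := by omega
          rw [this]
          omega
      -- anything agreeing with a member below d+1 is again in B'
      have hhalfG : ∀ τ ψ : Fin k → Bool, (Sum.inl (τ, ℓ) : CState k) ∈ B' →
          (∀ j : Fin k, j.val < d → τ j = ρ j) →
          (∀ j : Fin k, j.val < d + 1 → ψ j = τ j) →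
          (Sum.inl (ψ, ℓ) : CState k) ∈ B' := by
        intro τ ψ hτB hτρ hψτ
        have hsame := no_deep_split hk hs (by omega) hd1 hB hτρ
          (fun j hj => (hψτ j (by omega)).trans (hτρ j hj)) (fun j hj => (hψτ j hj).symm)
        exact mem_same_of_inSameBlock (hs.2.1 (i + 1) hin) hB' hτB hsame
      -- every member of B' agrees with σ0 below d+1
      have hall : ∀ z ∈ B', ∃ τ, (∀ j : Fin k, j.val < d + 1 → τ j = σ0 j) ∧
          z = Sum.inl (τ, ℓ) := by
        intro z hz
        obtain ⟨τ, hτ, rfl⟩ := mem_pb_iff.1 (hsub hz)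
        refine ⟨τ, ?_, rfl⟩
        intro j hj
        rcases Nat.lt_or_ge j.val d with h | h
        · exact (hτ j h).trans (hσ0 j h).symm
        · have hjd : j = ⟨d, hdlt⟩ := Fin.ext (by simp only [Fin.val_mk]; omega)
          subst hjd
          by_contra hne2
          apply hBB
          apply Finset.Subset.antisymm hsub
          intro z' hz'
          obtain ⟨ψ, hψ, rfl⟩ := mem_pb_iff.1 hz'
          by_cases hψd : ψ ⟨d, hdlt⟩ = σ0 ⟨d, hdlt⟩
          · refine hhalfG σ0 ψ hx0 hσ0 ?_
            intro m hm
            rcases Nat.lt_or_ge m.val d with h2 | h2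
            · exact (hψ m h2).trans (hσ0 m h2).symm
            · have : m = ⟨d, hdlt⟩ := Fin.ext (by simp only [Fin.val_mk]; omega)
              rw [this]; exact hψd
          · refine hhalfG τ ψ hz hτ ?_
            intro m hm
            rcases Nat.lt_or_ge m.val d with h2 | h2
            · exact (hψ m h2).trans (hτ m h2).symm
            · have hm2 : m = ⟨d, hdlt⟩ := Fin.ext (by simp only [Fin.val_mk]; omega)
              rw [hm2]
              -- Bool: ψ d ≠ σ0 d and τ d ≠ σ0 d imply ψ d = τ d
              rcases Bool.eq_false_or_eq_true (σ0 ⟨d, hdlt⟩) with h3 | h3 <;>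
                rcases Bool.eq_false_or_eq_true (ψ ⟨d, hdlt⟩) with h4 | h4 <;>
                rcases Bool.eq_false_or_eq_true (τ ⟨d, hdlt⟩) with h5 | h5 <;>
                simp_all
      refine ⟨ℓ, d + 1, σ0, by omega, by omega, ?_⟩
      ext z
      constructor
      · intro hz
        obtain ⟨τ, hτ, rfl⟩ := hall z hz
        exact inl_mem_pb_iff.2 ⟨hτ, rfl⟩
      · intro hz
        obtain ⟨τ, hτ, rfl⟩ := mem_pb_iff.1 hz
        exact hhalfG σ0 τ hx0 hσ0 hτ
    · exact Or.inr (hsub.trans htree)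

end Inv
/-! ### Words encoding numbers -/

lemma binVal_append (L : List Bool) (b : Bool) :
    binVal (L ++ [b]) = 2 * binVal L + b.toNat := by
  simp [binVal, List.foldl_append]

def natWord : ℕ → ℕ → List Bool
  | 0, _ => []
  | len + 1, m => natWord len (m / 2) ++ [decide (m % 2 = 1)]

lemma natWord_length (len m : ℕ) : (natWord len m).length = len := by
  induction len generalizing m with
  | zero => rfl
  | succ len ih => simp [natWord, ih]

lemma binVal_natWord (len m : ℕ) (h : m < 2 ^ len) : binVal (natWord len m) = m := by
  induction len generalizing m with
  | zero => interval_cases m; rfl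
  | succ len ih =>
    rw [natWord, binVal_append, ih (m / 2) (by rw [pow_succ] at h; omega)]
    rcases Nat.mod_two_eq_zero_or_one m with h2 | h2 <;> rw [h2] <;> simp <;> omega

/-! ### Precise image lemma -/

section IMG2
variable {k : ℕ}

lemma fd_symm (u v : Fin k → Bool) : fd u v = fd v u := by
  by_cases h : u = v
  · rw [fd, fd, dif_pos h, dif_pos h.symm]
  · obtain ⟨i, hiv, hid⟩ := fd_spec h
    obtain ⟨i', hiv', hid'⟩ := fd_spec (Ne.symm h)
    have h1 : fd v u ≤ i.val := fd_le_of_diff (Ne.symm hid)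
    have h2 : fd u v ≤ i'.val := fd_le_of_diff (Ne.symm hid')
    omega

lemma img_precise_aux {u v : Fin k → Bool} (j : Fin (k - 1)) (hJ1 : j.val + 1 < k)
    (hag : ∀ m : Fin k, m.val ≤ j.val → u m = v m)
    (hu : u ⟨j.val + 1, hJ1⟩ = true) (hv : v ⟨j.val + 1, hJ1⟩ = false) :
    bsStep u j ≠ bsStep v j ∧ fd (bsStep u j) (bsStep v j) = j.val := by
  have hJk : j.val < k := by omega
  have ha' : bsStep u j = ft u j.val := by rw [bsStep_eq, if_neg (by rw [hu]; simp)]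
  have hb' : bsStep v j = v := by rw [bsStep_eq, if_pos hv]
  have hlow : ∀ m : Fin k, m.val < j.val → bsStep u j m = bsStep v j m := by
    intro m hm
    rw [ha', hb', ft_agree_low _ _ _ hm]
    exact hag m (by omega)
  have hat : bsStep u j ⟨j.val, hJk⟩ ≠ bsStep v j ⟨j.val, hJk⟩ := by
    rw [ha', hb']
    have : ft u j.val ⟨j.val, hJk⟩ = !(u ⟨j.val, hJk⟩) := by
      rw [ft, if_neg (by simp), if_pos (by simp)]
    rw [this, ← hag ⟨j.val, hJk⟩ (by simp)]
    simp
  exact ⟨fun hc => hat (by rw [hc]), fd_eq hJk hlow hat⟩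

lemma img_precise {u v : Fin k → Bool} (hne : u ≠ v)
    (j : Fin (k - 1)) (hj : j.val + 1 = fd u v) :
    bsStep u j ≠ bsStep v j ∧ fd (bsStep u j) (bsStep v j) = j.val := by
  have hJ1 : j.val + 1 < k := by have := j.isLt; omega
  set i1 : Fin k := ⟨j.val + 1, hJ1⟩ with hi1
  have hdiff : u i1 ≠ v i1 := by
    obtain ⟨i, hiv, hid⟩ := fd_spec hne
    have : i = i1 := Fin.ext (by simp only [hi1, Fin.val_mk]; omega)
    exact this ▸ hid
  have hag : ∀ m : Fin k, m.val ≤ j.val → u m = v m := fun m hm =>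
    fd_agree (by omega)
  rcases hu : u i1 <;> rcases hv : v i1
  · exact absurd (hu.trans hv.symm) hdiff
  · obtain ⟨h1, h2⟩ := img_precise_aux j hJ1 (fun m hm => (hag m hm).symm) hv hu
    exact ⟨Ne.symm h1, (fd_symm _ _).trans h2⟩
  · exact img_precise_aux j hJ1 hag hu hv
  · exact absurd (hu.trans hv.symm) hdiff

end IMG2
/-! ### Tree words from lists -/

def twd {k : ℕ} (L : List Bool) (hh : L.length < treeHeight k + 1) :
    TreeWord (treeHeight k) :=
  ⟨⟨L.length, hh⟩, fun j => L.get j⟩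

lemma twd_nil {k : ℕ} (hh : ([] : List Bool).length < treeHeight k + 1) :
    twd [] hh = rootWord k := by
  unfold twd rootWord
  congr 1
  exact funext fun j => j.elim0

lemma twd_snoc {k : ℕ} (L : List Bool) (α : Bool) (hL : L.length < treeHeight k)
    (hh : L.length < treeHeight k + 1) :
    (⟨⟨L.length + 1, by omega⟩, Fin.snoc (twd L hh).2 α⟩ : TreeWord (treeHeight k))
      = twd (L ++ [α]) (by rw [List.length_append]; simpa using hL) := by
  unfold twd
  refine Sigma.ext (Fin.ext (by simp)) ?_
  rw [Fin.heq_fun_iff (by simp)]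
  intro i
  dsimp only
  rcases Nat.lt_or_ge i.val L.length with hi | hi
  · have hcast : i = Fin.castSucc ⟨i.val, hi⟩ := Fin.ext rfl
    rw [hcast, Fin.snoc_castSucc]
    simp only [List.get_eq_getElem, Fin.val_mk, Fin.coe_castSucc]
    exact (List.getElem_append_left hi).symm
  · have hi3 : (i : ℕ) < L.length + 1 := i.isLt
    have hieq : i.val = L.length := by omega
    have hcast : i = Fin.last L.length := Fin.ext (by simpa using hieq)
    rw [hcast, Fin.snoc_last]
    simp only [List.get_eq_getElem, Fin.val_last]
    rw [List.getElem_concat_length]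
    rfl

set_option linter.unusedSectionVars false

section StableCtx
variable {k : ℕ} {n : ℕ} {seq : ℕ → Finset (Finset (CState k))}
  (hs : ValidRefinementSeq (layered k) n seq)
include hs

lemma stable_step {s t : CState k} (h : inSameBlock (seq n) s t) (α : Bool) :
    inSameBlock (seq n) (csucc s α) (csucc t α) := by
  obtain ⟨B, hB, hsB, htB⟩ := h
  obtain ⟨C, hC, hsC⟩ := (hs.2.1 n le_rfl).2.2 (csucc s α)
  rcases hs.2.2.2 B hB C hC α with hall | hnone
  · obtain ⟨t', ht'C, htr⟩ := hall t htB
    rw [layered_tr_iff] at htr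
    subst htr
    exact ⟨C, hC, hsC, ht'C⟩
  · exact absurd ⟨csucc s α, hsC, (layered_tr_iff _ _ _).2 rfl⟩ (hnone s hsB)

lemma csucc_twd_lt {σ : Fin k → Bool} {L : List Bool} (hL : L.length < treeHeight k)
    (hh : L.length < treeHeight k + 1) (α : Bool) :
    csucc (Sum.inr (σ, twd L hh) : CState k) α
      = Sum.inr (σ, twd (L ++ [α]) (by rw [List.length_append]; simpa using hL)) := by
  rw [csucc_tree_lt (show (twd L hh).1.val < treeHeight k from hL) α]
  exact congrArg (fun w => (Sum.inr (σ, w) : CState k)) (twd_snoc L α hL hh)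

lemma csucc_twd_leaf {σ : Fin k → Bool} {L : List Bool} (hL : L.length = treeHeight k)
    (hh : L.length < treeHeight k + 1) (α : Bool) :
    csucc (Sum.inr (σ, twd L hh) : CState k) α
      = Sum.inl (bkSucc k σ (L ++ [α]), ⟨0, by positivity⟩) := by
  rw [csucc_leaf (show ¬ (twd L hh).1.val < treeHeight k by simp [twd, hL]) α]
  have hofn : List.ofFn (twd L hh).snd = L := List.ofFn_get L
  rw [hofn]

end StableCtx

lemma two_pow_treeHeight {k : ℕ} (hk : 1 < k) : k - 1 ≤ 2 ^ (treeHeight k + 1) := by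
  have h1 : k / 2 ≤ 2 ^ treeHeight k := Nat.le_pow_clog one_lt_two (k / 2)
  have h2 : 2 ^ (treeHeight k + 1) = 2 * 2 ^ treeHeight k := by ring
  omega
/-! ### Stable partitions separate all stake states -/

section StableMain
variable {k : ℕ} (hk : 1 < k) {n : ℕ} {seq : ℕ → Finset (Finset (CState k))}
  (hs : ValidRefinementSeq (layered k) n seq)
include hk hs

lemma stable_stake_ne : ∀ d, ∀ u v : Fin k → Bool, u ≠ v → fd u v = d →
    ∀ ℓ : Fin (2 ^ k),
      ¬ inSameBlock (seq n) (Sum.inl (u, ℓ) : CState k) (Sum.inl (v, ℓ)) := by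
  have kpos : 0 < k := by omega
  intro d
  induction d using Nat.strong_induction_on with
  | _ d ih =>
  intro u v hne hfd ℓ hsame
  have hd1 : 1 ≤ d := by
    by_contra h0
    have hsame0 : inSameBlock (seq 0) (Sum.inl (u, ℓ) : CState k) (Sum.inl (v, ℓ)) := by
      by_contra hsep0
      exact sep_mono hs (Nat.zero_le n) le_rfl hsep0 hsame
    have hfb : firstBit u = firstBit v := by
      by_contra hfb
      exact init_sep_firstBit hs hfb hsame0
    have := fd_pos kpos
      (((firstBit_eq_bit0 kpos).symm.trans hfb).trans (firstBit_eq_bit0 kpos))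
    omega
  have hdk : d < k := hfd ▸ fd_lt u v hne
  -- climb to the last level
  have climb : ∀ c, ∀ hc : ℓ.val + c < 2 ^ k,
      inSameBlock (seq n) (Sum.inl (u, ⟨ℓ.val + c, hc⟩) : CState k)
        (Sum.inl (v, ⟨ℓ.val + c, hc⟩)) := by
    intro c
    induction c with
    | zero =>
      intro hc
      have : (⟨ℓ.val + 0, hc⟩ : Fin (2 ^ k)) = ℓ := Fin.ext (by simp)
      rw [this]
      exact hsame
    | succ c ihc =>
      intro hc
      have hc' : ℓ.val + c < 2 ^ k := by omega
      have hstep := stable_step hs (ihc hc') false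
      have hlt : (⟨ℓ.val + c, hc'⟩ : Fin (2 ^ k)).val + 1 < 2 ^ k := by
        simp only [Fin.val_mk]; omega
      rw [csucc_stake_lt hlt, csucc_stake_lt hlt] at hstep
      have heq : (⟨(⟨ℓ.val + c, hc'⟩ : Fin (2 ^ k)).val + 1, hlt⟩ : Fin (2 ^ k))
          = ⟨ℓ.val + (c + 1), hc⟩ := Fin.ext (by simp only [Fin.val_mk]; omega)
      rwa [heq] at hstep
  have pk : 0 < 2 ^ k := by positivity
  have hlastmem : ℓ.val + (2 ^ k - 1 - ℓ.val) < 2 ^ k := by have := ℓ.isLt; omega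
  have hlast := climb (2 ^ k - 1 - ℓ.val) hlastmem
  have hroot : inSameBlock (seq n) (Sum.inr (u, rootWord k) : CState k)
      (Sum.inr (v, rootWord k)) := by
    have hstep := stable_step hs hlast false
    have hnlt : ¬ ((⟨ℓ.val + (2 ^ k - 1 - ℓ.val), hlastmem⟩ : Fin (2 ^ k)).val + 1 < 2 ^ k) := by
      simp only [Fin.val_mk]; have := ℓ.isLt; omega
    rwa [csucc_stake_last hnlt, csucc_stake_last hnlt] at hstep
  -- descend in the tree
  have desc : ∀ L : List Bool, ∀ hL : L.length < treeHeight k + 1,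
      inSameBlock (seq n) (Sum.inr (u, twd L hL) : CState k) (Sum.inr (v, twd L hL)) := by
    intro L
    induction L using List.reverseRecOn with
    | nil =>
      intro hL
      rw [twd_nil]
      exact hroot
    | append_singleton L α ihL =>
      intro hL
      have hLlt : L.length < treeHeight k := by
        rw [List.length_append] at hL; simp at hL; omega
      have hL' : L.length < treeHeight k + 1 := by omega
      have hstep := stable_step hs (ihL hL') α
      rw [csucc_twd_lt hs hLlt hL' α, csucc_twd_lt hs hLlt hL' α] at hstep
      convert hstep using 4
  -- choose the word with binary value d - 1
  have hpow : k - 1 ≤ 2 ^ (treeHeight k + 1) := two_pow_treeHeight hk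
  set L : List Bool := natWord (treeHeight k) ((d - 1) / 2) with hLdef
  have hLlen : L.length = treeHeight k := natWord_length _ _
  have hbinL : binVal L = (d - 1) / 2 := by
    apply binVal_natWord
    have h2 : 2 ^ (treeHeight k + 1) = 2 * 2 ^ treeHeight k := by ring
    omega
  set α : Bool := decide ((d - 1) % 2 = 1) with hαdef
  have hbin : binVal (L ++ [α]) = d - 1 := by
    rw [binVal_append, hbinL]
    rcases Nat.mod_two_eq_zero_or_one (d - 1) with h2 | h2 <;> rw [hαdef] <;>
      simp [h2] <;> omega
  have hleafsame := stable_step hs (desc L (by omega)) α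
  rw [csucc_twd_leaf hs hLlen (by omega) α, csucc_twd_leaf hs hLlen (by omega) α]
    at hleafsame
  rw [bkSucc_eq_bsStep hk u _, bkSucc_eq_bsStep hk v _] at hleafsame
  have hminval : min (binVal (L ++ [α])) (k - 2) = d - 1 := by
    rw [hbin]; omega
  set j0 : Fin (k - 1) := ⟨min (binVal (L ++ [α])) (k - 2), by
    have := min_le_right (binVal (L ++ [α])) (k - 2); omega⟩ with hj0def
  have hj0 : j0.val + 1 = fd u v := by
    rw [hj0def, hfd]; simp only [Fin.val_mk]; omega
  obtain ⟨hne2, hfd2⟩ := img_precise hne j0 hj0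
  exact ih j0.val (by omega) _ _ hne2 hfd2 _ hleafsame

end StableMain
/-! ### Appearance and disappearance of prefix blocks -/

section Appear
variable {k : ℕ} (hk : 1 < k) {n : ℕ} {seq : ℕ → Finset (Finset (CState k))}
  (hs : ValidRefinementSeq (layered k) n seq)
include hk hs

lemma pb_not_final {ℓ : Fin (2 ^ k)} {d : ℕ} (hd : d < k) (ρ : Fin k → Bool) :
    pb ℓ d ρ ∉ seq n := by
  intro hmem
  set u : Fin k → Bool := fun i => if i.val < d then ρ i else false with hu
  set v : Fin k → Bool := fun i => if i.val < d then ρ i else decide (i.val = d) with hv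
  have hud : u ⟨d, hd⟩ = false := by rw [hu]; simp
  have hvd : v ⟨d, hd⟩ = true := by rw [hv]; simp
  have hne : u ≠ v := fun h => by rw [h, hvd] at hud; simp at hud
  have hagree : ∀ i : Fin k, i.val < d → u i = v i := by
    intro i hi
    rw [hu, hv]
    simp only [if_pos hi]
  have hfd : fd u v = d := fd_eq hd hagree (by rw [hud, hvd]; simp)
  have humem : (Sum.inl (u, ℓ) : CState k) ∈ pb ℓ d ρ :=
    inl_mem_pb_iff.2 ⟨fun i hi => by rw [hu]; simp [if_pos hi], rfl⟩
  have hvmem : (Sum.inl (v, ℓ) : CState k) ∈ pb ℓ d ρ :=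
    inl_mem_pb_iff.2 ⟨fun i hi => by rw [hv]; simp [if_pos hi], rfl⟩
  exact stable_stake_ne hk hs d u v hne hfd ℓ ⟨pb ℓ d ρ, hmem, humem, hvmem⟩

omit hk in
lemma exists_exit {B : Finset (CState k)} :
    ∀ c i, n - i = c → i ≤ n → B ∈ seq i → B ∉ seq n →
    ∃ m, i ≤ m ∧ m < n ∧ B ∈ seq m ∧ B ∉ seq (m + 1) := by
  intro c
  induction c with
  | zero =>
    intro i hc hin hmem hnot
    have : i = n := by omega
    exact absurd (this ▸ hmem) hnot
  | succ c ih =>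
    intro i hc hin hmem hnot
    have hiltn : i < n := by omega
    by_cases hnext : B ∈ seq (i + 1)
    · obtain ⟨m, h1, h2, h3, h4⟩ := ih (i + 1) (by omega) (by omega) hnext hnot
      exact ⟨m, by omega, h2, h3, h4⟩
    · exact ⟨i, le_rfl, hiltn, hmem, hnext⟩

lemma pb_appears : ∀ d, 1 ≤ d → d < k → ∀ (ℓ : Fin (2 ^ k)) (ρ : Fin k → Bool),
    ∃ i ≤ n, pb ℓ d ρ ∈ seq i := by
  have kpos : 0 < k := by omega
  intro d
  induction d with
  | zero => intro h; omega
  | succ d ihd =>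
    intro _ hdk ℓ ρ
    rcases Nat.eq_zero_or_pos d with hd0 | hd1
    · subst hd0
      refine ⟨0, Nat.zero_le n, ?_⟩
      rw [seq_zero_eq hs, pb_one_eq_stakeBlock kpos]
      exact mem_cInit_iff.2 (Or.inl ⟨ℓ, firstBit ρ, rfl⟩)
    · obtain ⟨i0, hi0, hmem0⟩ := ihd hd1 (by omega) ℓ ρ
      have hnotn : pb ℓ d ρ ∉ seq n := pb_not_final hk hs (by omega) ρ
      obtain ⟨m, hm1, hm2, hm3, hm4⟩ := exists_exit hs (n - i0) i0 rfl hi0 hmem0 hnotn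
      -- the block of inl (ρ, ℓ) in seq (m+1) is pb ℓ (d+1) ρ
      have hρmem : (Sum.inl (ρ, ℓ) : CState k) ∈ pb ℓ d ρ :=
        inl_mem_pb_iff.2 ⟨fun _ _ => rfl, rfl⟩
      obtain ⟨B', hB', hxB'⟩ := (hs.2.1 (m + 1) (by omega)).2.2 (Sum.inl (ρ, ℓ) : CState k)
      obtain ⟨B'', hB'', hsub''⟩ := (hs.2.2.1 m hm2).1 B' hB'
      have hBeq : B'' = pb ℓ d ρ :=
        block_eq_of_mem (hs.2.1 m (by omega)) hB'' hm3 (hsub'' hxB') hρmem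
      have hsubB : B' ⊆ pb ℓ d ρ := hBeq ▸ hsub''
      -- invariant at m+1
      rcases invariant hk hs (m + 1) (by omega) B' hB' with ⟨ℓ', d', ρ', _, hd'k, rfl⟩ | htree
      · have hll : ℓ' = ℓ := ((inl_mem_pb_iff.1 hxB').2).symm
        subst hll
        have hne' : pb ℓ' d' ρ' ≠ pb ℓ' d ρ := fun h => hm4 (h ▸ hB')
        have hcardlt : (2 : ℕ) ^ (k - d') < 2 ^ (k - d) := by
          rw [← pb_card (ℓ := ℓ') hd'k ρ', ← pb_card (ℓ := ℓ') (by omega : d ≤ k) ρ]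
          exact Finset.card_lt_card (ssubset_of_subset_of_ne hsubB hne')
        have hdd : d < d' := by
          have := Nat.pow_lt_pow_iff_right (a := 2) one_lt_two |>.1 hcardlt
          omega
        -- the (d+1)-class of ρ is inside B'
        have hhalf : pb ℓ' (d + 1) ρ ⊆ pb ℓ' d' ρ' := by
          intro z hz
          obtain ⟨τ, hτ, rfl⟩ := mem_pb_iff.1 hz
          have hsame := no_deep_split hk hs hm2 hd1 hm3
            (fun _ _ => rfl) (fun j hj => hτ j (by omega)) (fun j hj => (hτ j hj).symm)
          exact mem_same_of_inSameBlock (hs.2.1 (m + 1) (by omega)) hB' hxB' hsame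
        have hcardle : (2 : ℕ) ^ (k - (d + 1)) ≤ 2 ^ (k - d') := by
          rw [← pb_card (ℓ := ℓ') (by omega : d + 1 ≤ k) ρ, ← pb_card (ℓ := ℓ') hd'k ρ']
          exact Finset.card_le_card hhalf
        have hdd2 : d' ≤ d + 1 := by
          have := (Nat.pow_le_pow_iff_right one_lt_two).1 hcardle
          omega
        have hdd3 : d' = d + 1 := by omega
        subst hdd3
        have : pb ℓ' (d + 1) ρ = pb ℓ' (d + 1) ρ' :=
          Finset.eq_of_subset_of_card_le hhalf
            (by rw [pb_card (by omega : d + 1 ≤ k), pb_card (by omega : d + 1 ≤ k)])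
        exact ⟨m + 1, by omega, this ▸ hB'⟩
      · exact absurd (htree hxB') inl_not_mem_treeBlock

end Appear
/-! ### Counting the refinement cost -/

section Count
variable {k : ℕ}

/-- canonical representatives: functions vanishing from `d` on -/
def canonReps (k d : ℕ) : Finset (Fin k → Bool) :=
  Finset.univ.filter fun ρ => ∀ i : Fin k, d ≤ i.val → ρ i = false

lemma canonReps_card {d : ℕ} (hd : d ≤ k) : (canonReps k d).card = 2 ^ d := by
  rw [show (2 : ℕ) ^ d = Fintype.card (Fin d → Bool) by simp [Fintype.card_fun]]
  rw [← Finset.card_univ, canonReps]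
  refine Finset.card_nbij' (fun ρ => fun j : Fin d => ρ ⟨j.val, by omega⟩)
    (fun τ => fun i : Fin k => if h : i.val < d then τ ⟨i.val, h⟩ else false)
    (fun ρ _ => Finset.mem_univ _) ?_ ?_ ?_
  · intro τ _
    simp only [Finset.mem_coe, Finset.mem_filter, Finset.mem_univ, true_and]
    intro i hi
    rw [dif_neg (by omega)]
  · intro ρ hρ
    simp only [Finset.mem_coe, Finset.mem_filter, Finset.mem_univ, true_and] at hρ
    funext i
    dsimp only
    by_cases hi : i.val < d
    · rw [dif_pos hi]
    · rw [dif_neg hi, hρ i (by omega)]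
  · intro τ _
    funext j
    dsimp only
    rw [dif_pos (by exact j.isLt)]

def cellPB (ℓ : Fin (2 ^ k)) (d : ℕ) : Finset (Finset (CState k)) :=
  Finset.univ.image fun ρ : Fin k → Bool => pb ℓ d ρ

lemma mem_cellPB {B : Finset (CState k)} {ℓ : Fin (2 ^ k)} {d : ℕ} :
    B ∈ cellPB ℓ d ↔ ∃ ρ, B = pb ℓ d ρ := by
  simp only [cellPB, Finset.mem_image, Finset.mem_univ, true_and]
  constructor
  · rintro ⟨ρ, h⟩; exact ⟨ρ, h.symm⟩
  · rintro ⟨ρ, h⟩; exact ⟨ρ, h.symm⟩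

lemma trunc_mem_canonReps (d : ℕ) (ρ : Fin k → Bool) :
    (fun i : Fin k => if i.val < d then ρ i else false) ∈ canonReps k d := by
  simp only [canonReps, Finset.mem_filter, Finset.mem_univ, true_and]
  intro i hi
  rw [if_neg (by omega)]

lemma pb_trunc (ℓ : Fin (2 ^ k)) (d : ℕ) (ρ : Fin k → Bool) :
    pb ℓ d ρ = pb ℓ d (fun i : Fin k => if i.val < d then ρ i else false) :=
  pb_eq_of_agree fun i hi => by rw [if_pos hi]

lemma cellPB_eq (ℓ : Fin (2 ^ k)) (d : ℕ) :
    cellPB ℓ d = (canonReps k d).image fun ρ => pb ℓ d ρ := by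
  ext B
  rw [mem_cellPB, Finset.mem_image]
  constructor
  · rintro ⟨ρ, rfl⟩
    exact ⟨_, trunc_mem_canonReps d ρ, (pb_trunc ℓ d ρ).symm⟩
  · rintro ⟨ρ, _, rfl⟩
    exact ⟨ρ, rfl⟩

lemma pb_agree_of_eq {ℓ : Fin (2 ^ k)} {d : ℕ} {ρ ρ' : Fin k → Bool}
    (h : pb ℓ d ρ = pb ℓ d ρ') : ∀ i : Fin k, i.val < d → ρ i = ρ' i := by
  have hρ : (Sum.inl (ρ, ℓ) : CState k) ∈ pb ℓ d ρ' :=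
    h ▸ inl_mem_pb_iff.2 ⟨fun _ _ => rfl, rfl⟩
  exact fun i hi => (inl_mem_pb_iff.1 hρ).1 i hi

lemma cellPB_card {ℓ : Fin (2 ^ k)} {d : ℕ} (hd : d ≤ k) :
    (cellPB ℓ d).card = 2 ^ d := by
  rw [cellPB_eq, Finset.card_image_of_injOn, canonReps_card hd]
  intro ρ hρ ρ' hρ' heq
  simp only [Finset.mem_coe, canonReps, Finset.mem_filter, Finset.mem_univ, true_and] at hρ hρ'
  funext i
  by_cases hi : i.val < d
  · exact pb_agree_of_eq heq i hi
  · rw [hρ i (by omega), hρ' i (by omega)]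

lemma pb_params {ℓ ℓ' : Fin (2 ^ k)} {d d' : ℕ} (hd : d ≤ k) (hd' : d' ≤ k)
    {ρ ρ' : Fin k → Bool} (h : pb ℓ d ρ = pb ℓ' d' ρ') : ℓ = ℓ' ∧ d = d' := by
  have hρ : (Sum.inl (ρ, ℓ) : CState k) ∈ pb ℓ' d' ρ' :=
    h ▸ inl_mem_pb_iff.2 ⟨fun _ _ => rfl, rfl⟩
  have hℓ : ℓ = ℓ' := (inl_mem_pb_iff.1 hρ).2
  have hcard : (2 : ℕ) ^ (k - d) = 2 ^ (k - d') := by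
    rw [← pb_card (ℓ := ℓ) hd ρ, ← pb_card (ℓ := ℓ') hd' ρ', h]
  have := Nat.pow_right_injective (le_refl 2) hcard
  exact ⟨hℓ, by omega⟩

/-- the collection of all proper prefix blocks -/
def allPB (k : ℕ) (hk : 1 < k) : Finset (Finset (CState k)) :=
  ((Finset.univ : Finset (Fin (2 ^ k))) ×ˢ Finset.Ico 1 k).biUnion fun p =>
    cellPB p.1 p.2

lemma mem_allPB {hk : 1 < k} {B : Finset (CState k)} :
    B ∈ allPB k hk ↔ ∃ (ℓ : Fin (2 ^ k)) (d : ℕ) (ρ : Fin k → Bool),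
      1 ≤ d ∧ d < k ∧ B = pb ℓ d ρ := by
  simp only [allPB, Finset.mem_biUnion, Finset.mem_product, Finset.mem_univ, true_and,
    Finset.mem_Ico, mem_cellPB]
  constructor
  · rintro ⟨p, ⟨h1, h2⟩, ρ, rfl⟩
    exact ⟨p.1, p.2, ρ, h1, h2, rfl⟩
  · rintro ⟨ℓ, d, ρ, h1, h2, rfl⟩
    exact ⟨⟨ℓ, d⟩, ⟨h1, h2⟩, ρ, rfl⟩

lemma allPB_sum (hk : 1 < k) :
    ∑ B ∈ allPB k hk, B.card / 2 = (k - 1) * 2 ^ (2 * k - 1) := by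
  rw [allPB, Finset.sum_biUnion]
  · have hcell : ∀ p ∈ (Finset.univ : Finset (Fin (2 ^ k))) ×ˢ Finset.Ico 1 k,
        ∑ B ∈ cellPB p.1 p.2, B.card / 2 = 2 ^ (k - 1) := by
      rintro ⟨ℓ, d⟩ hp
      rw [Finset.mem_product, Finset.mem_Ico] at hp
      obtain ⟨-, hd1, hdk⟩ := hp
      have hconst : ∀ B ∈ cellPB ℓ d, B.card / 2 = 2 ^ (k - d - 1) := by
        intro B hB
        obtain ⟨ρ, rfl⟩ := mem_cellPB.1 hB
        obtain ⟨e, he⟩ : ∃ e, k - d = e + 1 := ⟨k - d - 1, by omega⟩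
        rw [pb_card (by omega) ρ, he, pow_succ,
          Nat.mul_div_cancel _ (by norm_num : (0:ℕ) < 2)]
        first
        | rfl
        | (congr 1; omega)
      rw [Finset.sum_congr rfl hconst, Finset.sum_const, cellPB_card (by omega),
        smul_eq_mul, ← pow_add]
      congr 1
      omega
    rw [Finset.sum_congr rfl hcell, Finset.sum_const, Finset.card_product,
      Finset.card_univ, smul_eq_mul]
    rw [Nat.card_Ico, Fintype.card_fin]
    rw [show 2 * k - 1 = k + (k - 1) by omega, pow_add]
    ring
  · rintro p hp q hq hpq
    rw [Finset.mem_coe, Finset.mem_product, Finset.mem_Ico] at hp hq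
    refine Finset.disjoint_left.2 fun B hBp hBq => hpq ?_
    obtain ⟨ρ, rfl⟩ := mem_cellPB.1 hBp
    obtain ⟨ρ', heq⟩ := mem_cellPB.1 hBq
    obtain ⟨h1, h2⟩ := pb_params (by omega) (by omega) heq
    exact Prod.ext h1 h2

end Count
/-! ### The cost of every valid refinement sequence -/

section MainBound
variable {k : ℕ} (hk : 1 < k) {n : ℕ} {seq : ℕ → Finset (Finset (CState k))}
  (hs : ValidRefinementSeq (layered k) n seq)
include hk hs

lemma event_cost {i : ℕ} {ℓ : Fin (2 ^ k)} {d : ℕ} (hi : i < n) (hd1 : 1 ≤ d)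
    (hdk : d < k) {ρ : Fin k → Bool}
    (hnot : pb ℓ d ρ ∉ seq (i + 1)) :
    (pb ℓ d ρ).card / 2 ≤ (pb ℓ d ρ).card -
      ((seq (i + 1)).filter fun B' => B' ⊆ pb ℓ d ρ).sup Finset.card := by
  have hsup : ((seq (i + 1)).filter fun B' => B' ⊆ pb ℓ d ρ).sup Finset.card
      ≤ 2 ^ (k - d - 1) := by
    apply Finset.sup_le
    intro B' hB'
    rw [Finset.mem_filter] at hB'
    obtain ⟨hB'mem, hB'sub⟩ := hB'
    rcases invariant hk hs (i + 1) (by omega) B' hB'mem with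
      ⟨ℓ', d', ρ', hd'1, hd'k, rfl⟩ | htree
    · have hne : pb ℓ' d' ρ' ≠ pb ℓ d ρ := fun h => hnot (h ▸ hB'mem)
      have hlt : (2 : ℕ) ^ (k - d') < 2 ^ (k - d) := by
        rw [← pb_card hd'k ρ', ← pb_card (le_of_lt hdk) ρ]
        exact Finset.card_lt_card (ssubset_of_subset_of_ne hB'sub hne)
      have hdd : d < d' := by
        have := (Nat.pow_lt_pow_iff_right (one_lt_two)).1 hlt
        omega
      rw [pb_card hd'k ρ']
      exact Nat.pow_le_pow_right (by norm_num) (by omega)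
    · exfalso
      have hne : B'.Nonempty := Finset.nonempty_iff_ne_empty.2
        (fun h => (hs.2.1 (i + 1) (by omega)).1 (h ▸ hB'mem))
      obtain ⟨z, hz⟩ := hne
      obtain ⟨σ, _, rfl⟩ := mem_pb_iff.1 (hB'sub hz)
      exact inl_not_mem_treeBlock (htree hz)
  rw [pb_card (le_of_lt hdk) ρ]
  have h1 : (2 : ℕ) ^ (k - d) = 2 ^ (k - d - 1) * 2 := by
    rw [← pow_succ]
    congr 1
    omega
  omega

lemma IRCseq_bound : (k - 1) * 2 ^ (2 * k - 1) ≤ IRCseq n seq := by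
  classical
  have hex : ∀ B : Finset (CState k), B ∈ allPB k hk →
      ∃ i, i < n ∧ B ∈ seq i ∧ B ∉ seq (i + 1) := by
    intro B hB
    obtain ⟨ℓ, d, ρ, hd1, hdk, rfl⟩ := mem_allPB.1 hB
    obtain ⟨i0, hi0, hmem⟩ := pb_appears hk hs d hd1 hdk ℓ ρ
    have hnot : pb ℓ d ρ ∉ seq n := pb_not_final hk hs hdk ρ
    obtain ⟨m, _, h2, h3, h4⟩ := exists_exit hs (n - i0) i0 rfl hi0 hmem hnot
    exact ⟨m, h2, h3, h4⟩
  set g : Finset (CState k) → ℕ := fun B =>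
    if h : ∃ i, i < n ∧ B ∈ seq i ∧ B ∉ seq (i + 1) then Nat.find h else 0 with hgdef
  have hgspec : ∀ B ∈ allPB k hk, g B < n ∧ B ∈ seq (g B) ∧ B ∉ seq (g B + 1) := by
    intro B hB
    have h := hex B hB
    rw [hgdef]
    dsimp only
    rw [dif_pos h]
    exact Nat.find_spec h
  set S : ℕ → Finset (Finset (CState k)) := fun i =>
    (seq i).filter fun B => B ∉ seq (i + 1) ∧ B ∈ allPB k hk with hSdef
  have step1 : ∑ i ∈ Finset.range n, ∑ B ∈ S i, B.card / 2 ≤ IRCseq n seq := by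
    rw [IRCseq]
    apply Finset.sum_le_sum
    intro i hi
    rw [Finset.mem_range] at hi
    rw [IRCstep]
    calc ∑ B ∈ S i, B.card / 2
        ≤ ∑ B ∈ S i,
            (B.card - ((seq (i + 1)).filter fun B' => B' ⊆ B).sup Finset.card) := by
          apply Finset.sum_le_sum
          intro B hB
          rw [hSdef, Finset.mem_filter] at hB
          obtain ⟨hBmem, hBnot, hBA⟩ := hB
          obtain ⟨ℓ, d, ρ, hd1, hdk, rfl⟩ := mem_allPB.1 hBA
          exact event_cost hk hs hi hd1 hdk hBnot
      _ ≤ _ := Finset.sum_le_sum_of_subset (Finset.filter_subset _ _)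
  have step2 : ∑ B ∈ allPB k hk, B.card / 2
      ≤ ∑ i ∈ Finset.range n, ∑ B ∈ S i, B.card / 2 := by
    rw [← Finset.sum_sigma (Finset.range n) S
      (fun u : Σ _ : ℕ, Finset (CState k) => u.2.card / 2)]
    have hinj : ∀ B ∈ allPB k hk, ∀ B' ∈ allPB k hk,
        (⟨g B, B⟩ : Σ _ : ℕ, Finset (CState k)) = ⟨g B', B'⟩ → B = B' := by
      intro B _ B' _ h
      exact congrArg Sigma.snd h
    have himg : ∑ u ∈ (allPB k hk).image
          (fun B => (⟨g B, B⟩ : Σ _ : ℕ, Finset (CState k))), u.2.card / 2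
        = ∑ B ∈ allPB k hk, B.card / 2 := Finset.sum_image hinj
    rw [← himg]
    apply Finset.sum_le_sum_of_subset
    intro u hu
    rw [Finset.mem_image] at hu
    obtain ⟨B, hB, rfl⟩ := hu
    obtain ⟨h1, h2, h3⟩ := hgspec B hB
    rw [Finset.mem_sigma]
    refine ⟨Finset.mem_range.2 h1, ?_⟩
    rw [hSdef]
    exact Finset.mem_filter.2 ⟨h2, h3, hB⟩
  calc (k - 1) * 2 ^ (2 * k - 1) = ∑ B ∈ allPB k hk, B.card / 2 := (allPB_sum hk).symm
    _ ≤ _ := le_trans step2 step1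

end MainBound
/-! ### Existence of a valid refinement sequence -/

section Existence
variable {k : ℕ}

open Classical in
noncomputable def sigClass (π : Finset (Finset (CState k))) (x : CState k) :
    Finset (CState k) :=
  Finset.univ.filter fun y =>
    inSameBlock π x y ∧ ∀ α, inSameBlock π (csucc x α) (csucc y α)

open Classical in
noncomputable def refineF (π : Finset (Finset (CState k))) :
    Finset (Finset (CState k)) :=
  Finset.univ.image fun x => sigClass π x

lemma mem_sigClass {π : Finset (Finset (CState k))} {x y : CState k} :
    y ∈ sigClass π x ↔
      inSameBlock π x y ∧ ∀ α, inSameBlock π (csucc x α) (csucc y α) := by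
  rw [sigClass]
  simp

lemma mem_refineF {π : Finset (Finset (CState k))} {B : Finset (CState k)} :
    B ∈ refineF π ↔ ∃ x, B = sigClass π x := by
  rw [refineF]
  simp only [Finset.mem_image, Finset.mem_univ, true_and]
  exact ⟨fun ⟨x, h⟩ => ⟨x, h.symm⟩, fun ⟨x, h⟩ => ⟨x, h.symm⟩⟩

variable {π : Finset (Finset (CState k))} (hπ : IsBlockPartition π)
include hπ

lemma self_mem_sigClass (x : CState k) : x ∈ sigClass π x :=
  mem_sigClass.2 ⟨inSameBlock_refl hπ x, fun _ => inSameBlock_refl hπ _⟩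

lemma sigClass_eq {x y : CState k} (h : y ∈ sigClass π x) :
    sigClass π x = sigClass π y := by
  rw [mem_sigClass] at h
  ext z
  rw [mem_sigClass, mem_sigClass]
  constructor
  · rintro ⟨h1, h2⟩
    exact ⟨inSameBlock_trans hπ (inSameBlock_symm h.1) h1,
      fun α => inSameBlock_trans hπ (inSameBlock_symm (h.2 α)) (h2 α)⟩
  · rintro ⟨h1, h2⟩
    exact ⟨inSameBlock_trans hπ h.1 h1,
      fun α => inSameBlock_trans hπ (h.2 α) (h2 α)⟩

lemma refineF_partition : IsBlockPartition (refineF π) := by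
  refine ⟨?_, ?_, ?_⟩
  · intro hmem
    obtain ⟨x, hx⟩ := mem_refineF.1 hmem
    have := self_mem_sigClass hπ x
    rw [← hx] at this
    exact absurd this (Finset.notMem_empty x)
  · intro B hB B' hB' hne
    obtain ⟨x, rfl⟩ := mem_refineF.1 hB
    obtain ⟨y, rfl⟩ := mem_refineF.1 hB'
    refine Finset.disjoint_left.2 fun z hz hz' => hne ?_
    rw [sigClass_eq hπ hz, sigClass_eq hπ hz']
  · intro x
    exact ⟨sigClass π x, mem_refineF.2 ⟨x, rfl⟩, self_mem_sigClass hπ x⟩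

lemma refineF_refines : RefinesPart (refineF π) π := by
  intro B hB
  obtain ⟨x, rfl⟩ := mem_refineF.1 hB
  obtain ⟨C, hC, hxC⟩ := hπ.2.2 x
  refine ⟨C, hC, fun y hy => ?_⟩
  exact mem_same_of_inSameBlock hπ hC hxC (mem_sigClass.1 hy).1

lemma refineF_same_iff {s t : CState k} :
    inSameBlock (refineF π) s t ↔
      (inSameBlock π s t ∧ ∀ α, inSameBlock π (csucc s α) (csucc t α)) := by
  constructor
  · rintro ⟨B, hB, hs, ht⟩
    obtain ⟨x, rfl⟩ := mem_refineF.1 hB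
    rw [mem_sigClass] at hs ht
    exact ⟨inSameBlock_trans hπ (inSameBlock_symm hs.1) ht.1,
      fun α => inSameBlock_trans hπ (inSameBlock_symm (hs.2 α)) (ht.2 α)⟩
  · rintro ⟨h1, h2⟩
    exact ⟨sigClass π s, mem_refineF.2 ⟨s, rfl⟩, self_mem_sigClass hπ s,
      mem_sigClass.2 ⟨h1, h2⟩⟩

lemma refineF_valid (hne : refineF π ≠ π) :
    ValidRefinement (layered k) π (refineF π) := by
  refine ⟨refineF_refines hπ, hne, ?_⟩
  intro s t hsep
  by_cases hsame : inSameBlock π s t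
  · right
    left
    rw [refineF_same_iff hπ] at hsep
    push_neg at hsep
    obtain ⟨α, hα⟩ := hsep hsame
    exact ⟨α, csucc s α, (layered_tr_iff _ _ _).2 rfl, fun t' ht' => by
      rw [layered_tr_iff] at ht'
      subst ht'
      exact hα⟩
  · exact Or.inl hsame

lemma refineF_stable (hfix : refineF π = π) :
    IsStablePartition (layered k) π := by
  intro B hB C hC α
  by_cases hr : ∃ s ∈ B, ReachesSet (layered k) s α C
  · left
    obtain ⟨s, hsB, t, htC, htr⟩ := hr
    rw [layered_tr_iff] at htr
    subst htr
    intro u huB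
    have hsame : inSameBlock π s u := ⟨B, hB, hsB, huB⟩
    have hsig : inSameBlock π (csucc s α) (csucc u α) := by
      have : inSameBlock (refineF π) s u := by rw [hfix]; exact hsame
      exact (refineF_same_iff hπ |>.1 this).2 α
    exact ⟨csucc u α, mem_same_of_inSameBlock hπ hC htC hsig,
      (layered_tr_iff _ _ _).2 rfl⟩
  · right
    push_neg at hr
    exact hr

end Existence
/-! ### Strict refinements increase the number of blocks -/

section Exist2
variable {k : ℕ}

lemma card_lt_of_strict_refine {π π' : Finset (Finset (CState k))}
    (hπ : IsBlockPartition π) (hπ' : IsBlockPartition π')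
    (href : RefinesPart π' π) (hne : π' ≠ π) : π.card < π'.card := by
  classical
  have hchild : ∀ B ∈ π, ∃ B' ∈ π', B'.Nonempty ∧ B' ⊆ B := by
    intro B hB
    have hBne : B.Nonempty := Finset.nonempty_iff_ne_empty.2 (fun h => hπ.1 (h ▸ hB))
    obtain ⟨x, hx⟩ := hBne
    obtain ⟨B', hB', hxB'⟩ := hπ'.2.2 x
    obtain ⟨C, hC, hsub⟩ := href B' hB'
    have hCB : C = B := block_eq_of_mem hπ hC hB (hsub hxB') hx
    exact ⟨B', hB', ⟨x, hxB'⟩, hCB ▸ hsub⟩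
  choose! c hc1 hc2 hc3 using hchild
  have hcinj : ∀ B₁ ∈ π, ∀ B₂ ∈ π, c B₁ = c B₂ → B₁ = B₂ := by
    intro B₁ h1 B₂ h2 heq
    obtain ⟨x, hx⟩ := hc2 B₁ h1
    exact block_eq_of_mem hπ h1 h2 (hc3 B₁ h1 hx) (hc3 B₂ h2 (heq ▸ hx))
  have hle : π.card ≤ π'.card :=
    Finset.card_le_card_of_injOn c (fun B hB => hc1 B hB)
      (fun B₁ h1 B₂ h2 h => hcinj B₁ (Finset.mem_coe.1 h1) B₂ (Finset.mem_coe.1 h2) h)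
  rcases lt_or_eq_of_le hle with h | hcard
  · exact h
  exfalso
  apply hne
  have himgsub : π.image c ⊆ π' := by
    intro B' hB'
    rw [Finset.mem_image] at hB'
    obtain ⟨B, hB, rfl⟩ := hB'
    exact hc1 B hB
  have himg : π.image c = π' := Finset.eq_of_subset_of_card_le himgsub (by
    rw [Finset.card_image_of_injOn
      (fun B₁ h1 B₂ h2 h => hcinj B₁ (Finset.mem_coe.1 h1) B₂ (Finset.mem_coe.1 h2) h)]
    omega)
  -- every block of π' equals its parent
  have hkey : ∀ B' ∈ π', ∀ B ∈ π, B' ⊆ B → B ⊆ B' := by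
    intro B' hB' B hB hsub x hxB
    obtain ⟨B'', hB'', hxB''⟩ := hπ'.2.2 x
    obtain ⟨C, hC, hsubC⟩ := href B'' hB''
    have hCB : C = B := block_eq_of_mem hπ hC hB (hsubC hxB'') hxB
    obtain ⟨D, hD, hDc⟩ := Finset.mem_image.1 (himg ▸ hB'')
    have hDB : D = B := block_eq_of_mem hπ hD hB (hc3 D hD (hDc ▸ hxB'')) hxB
    -- also B' = c B
    have hB'ne : B'.Nonempty := Finset.nonempty_iff_ne_empty.2 (fun h => hπ'.1 (h ▸ hB'))
    obtain ⟨y, hy⟩ := hB'ne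
    obtain ⟨E, hE, hEc⟩ := Finset.mem_image.1 (himg ▸ hB')
    have hEB : E = B := block_eq_of_mem hπ hE hB (hc3 E hE (hEc ▸ hy)) (hsub hy)
    have : B'' = B' := by rw [← hDc, hDB, ← hEc, hEB]
    exact this ▸ hxB''
  ext B₀
  constructor
  · intro hB₀
    obtain ⟨B, hB, hsub⟩ := href B₀ hB₀
    have : B₀ = B := Finset.Subset.antisymm hsub (hkey B₀ hB₀ B hB hsub)
    exact this ▸ hB
  · intro hB₀
    have hc : c B₀ ∈ π' := hc1 B₀ hB₀
    have : B₀ = c B₀ :=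
      Finset.Subset.antisymm (hkey (c B₀) hc B₀ hB₀ (hc3 B₀ hB₀)) (hc3 B₀ hB₀)
    exact this ▸ hc

lemma partition_card_le {π : Finset (Finset (CState k))} (hπ : IsBlockPartition π) :
    π.card ≤ Fintype.card (CState k) := by
  classical
  have h1 : π.card ≤ ∑ B ∈ π, B.card := by
    calc π.card = ∑ _B ∈ π, 1 := by simp
      _ ≤ ∑ B ∈ π, B.card := Finset.sum_le_sum fun B hB =>
          Finset.card_pos.2 (Finset.nonempty_iff_ne_empty.2 (fun h => hπ.1 (h ▸ hB)))
  have h2 : (π.biUnion id).card = ∑ B ∈ π, B.card :=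
    Finset.card_biUnion (fun B hB B' hB' hne => hπ.2.1 B hB B' hB' hne)
  calc π.card ≤ ∑ B ∈ π, B.card := h1
    _ = (π.biUnion id).card := h2.symm
    _ ≤ (Finset.univ : Finset (CState k)).card := Finset.card_le_card (Finset.subset_univ _)
    _ = Fintype.card (CState k) := Finset.card_univ

lemma cInit_partition (hk : 0 < k) : IsBlockPartition (cInit k) := by
  refine ⟨?_, ?_, ?_⟩
  · intro hmem
    rcases mem_cInit_iff.1 hmem with ⟨ℓ, b, hb⟩ | hb
    · have : (Sum.inl ((fun _ => b), ℓ) : CState k) ∈ (∅ : Finset (CState k)) :=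
        hb ▸ inl_mem_stakeBlock_iff.2 ⟨firstBit_eq_bit0 hk, rfl⟩
      exact absurd this (Finset.notMem_empty _)
    · have : (Sum.inr ((fun _ => false), rootWord k) : CState k) ∈ (∅ : Finset (CState k)) :=
        hb ▸ inr_mem_treeBlock
      exact absurd this (Finset.notMem_empty _)
  · intro B hB B' hB' hne
    refine Finset.disjoint_left.2 fun z hz hz' => hne ?_
    rcases mem_cInit_iff.1 hB with ⟨ℓ, b, rfl⟩ | rfl <;>
      rcases mem_cInit_iff.1 hB' with ⟨ℓ', b', rfl⟩ | rfl
    · rcases z with ⟨σ, m⟩ | ⟨σ, w⟩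
      · obtain ⟨h1, h2⟩ := inl_mem_stakeBlock_iff.1 hz
        obtain ⟨h3, h4⟩ := inl_mem_stakeBlock_iff.1 hz'
        rw [← h2, h4, ← h1, h3]
      · exact absurd hz (by simp [stakeBlock])
    · rcases z with ⟨σ, m⟩ | ⟨σ, w⟩
      · exact absurd hz' inl_not_mem_treeBlock
      · exact absurd hz (by simp [stakeBlock])
    · rcases z with ⟨σ, m⟩ | ⟨σ, w⟩
      · exact absurd hz inl_not_mem_treeBlock
      · exact absurd hz' (by simp [stakeBlock])
    · rfl
  · intro s
    rcases s with ⟨σ, m⟩ | ⟨σ, w⟩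
    · exact ⟨stakeBlock k m (firstBit σ), mem_cInit_iff.2 (Or.inl ⟨m, firstBit σ, rfl⟩),
        inl_mem_stakeBlock_iff.2 ⟨rfl, rfl⟩⟩
    · exact ⟨treeBlock k, mem_cInit_iff.2 (Or.inr rfl), inr_mem_treeBlock⟩

noncomputable def seqF (k : ℕ) : ℕ → Finset (Finset (CState k)) :=
  fun i => refineF^[i] (cInit k)

lemma seqF_zero : seqF k 0 = cInit k := rfl

lemma seqF_succ (i : ℕ) : seqF k (i + 1) = refineF (seqF k i) :=
  Function.iterate_succ_apply' _ _ _

lemma seqF_partition (hk : 0 < k) : ∀ i, IsBlockPartition (seqF k i) := by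
  intro i
  induction i with
  | zero => exact cInit_partition hk
  | succ i ih => rw [seqF_succ]; exact refineF_partition ih

lemma exists_valid_seq (hk : 1 < k) :
    ∃ (n : ℕ) (seq : ℕ → Finset (Finset (CState k))),
      ValidRefinementSeq (layered k) n seq := by
  classical
  have kpos : 0 < k := by omega
  set N := Fintype.card (CState k) with hN
  have hfix : ∃ m, refineF (seqF k m) = seqF k m := by
    by_contra hcon
    push_neg at hcon
    have hgrow : ∀ i, 1 + i ≤ (seqF k i).card := by
      intro i
      induction i with
      | zero =>
        have : (seqF k 0).Nonempty := ⟨treeBlock k, by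
          rw [seqF_zero]; exact mem_cInit_iff.2 (Or.inr rfl)⟩
        have := Finset.card_pos.2 this
        omega
      | succ i ih =>
        have hlt : (seqF k i).card < (seqF k (i + 1)).card := by
          rw [seqF_succ]
          exact card_lt_of_strict_refine (seqF_partition kpos i)
            (refineF_partition (seqF_partition kpos i))
            (refineF_refines (seqF_partition kpos i)) (hcon i)
        omega
    have h1 := hgrow N
    have h2 := partition_card_le (seqF_partition kpos N)
    omega
  set m := Nat.find hfix with hm
  refine ⟨m, seqF k, rfl, fun i _ => seqF_partition kpos i, ?_, ?_⟩
  · intro i hi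
    rw [seqF_succ]
    exact refineF_valid (seqF_partition kpos i) (Nat.find_min hfix hi)
  · exact refineF_stable (seqF_partition kpos m) (Nat.find_spec hfix)

end Exist2
/-! ### Cardinality of the state space and the main theorem -/

lemma sum_two_pow (n : ℕ) : ∑ i ∈ Finset.range n, 2 ^ i = 2 ^ n - 1 := by
  induction n with
  | zero => rfl
  | succ n ih =>
    rw [Finset.sum_range_succ, ih, pow_succ]
    have : 1 ≤ 2 ^ n := Nat.one_le_two_pow
    omega

lemma card_CState (k : ℕ) :
    Fintype.card (CState k) = 2 ^ k * (2 ^ k + 2 ^ (treeHeight k + 1) - 1) := by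
  have hcard_fun : Fintype.card (Fin k → Bool) = 2 ^ k := by
    simp [Fintype.card_fun]
  have htree : Fintype.card (TreeWord (treeHeight k)) = 2 ^ (treeHeight k + 1) - 1 := by
    rw [show Fintype.card (TreeWord (treeHeight k))
        = ∑ i : Fin (treeHeight k + 1), Fintype.card (Fin i.val → Bool) from
      Fintype.card_sigma]
    have : ∀ i : Fin (treeHeight k + 1), Fintype.card (Fin i.val → Bool) = 2 ^ i.val := by
      intro i
      simp [Fintype.card_fun]
    rw [Finset.sum_congr rfl (fun i _ => this i), Fin.sum_univ_eq_sum_range (fun i => 2 ^ i),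
      sum_two_pow]
  have h1 : Fintype.card (CState k)
      = 2 ^ k * 2 ^ k + 2 ^ k * (2 ^ (treeHeight k + 1) - 1) := by
    rw [show Fintype.card (CState k)
        = Fintype.card ((Fin k → Bool) × Fin (2 ^ k))
          + Fintype.card ((Fin k → Bool) × TreeWord (treeHeight k)) from Fintype.card_sum]
    rw [Fintype.card_prod, Fintype.card_prod, hcard_fun, htree, Fintype.card_fin]
  rw [h1]
  have hb : 1 ≤ 2 ^ (treeHeight k + 1) := Nat.one_le_two_pow
  rw [Nat.add_sub_assoc hb, Nat.mul_add]

theorem IRC_layered_bound {k : ℕ} (hk : 1 < k) :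
    (k - 1) * 2 ^ (2 * k - 1) ≤ IRC (layered k) := by
  rw [IRC]
  apply le_csInf
  · obtain ⟨n, seq, hval⟩ := exists_valid_seq hk
    exact ⟨IRCseq n seq, n, seq, hval, rfl⟩
  · rintro c ⟨n, seq, hval, rfl⟩
    exact IRCseq_bound hk hval
/-- For k > 1, `IRC(C_k) ≥ (k-1)·2^(2k-1)`; since `C_k` has
`n = 2^k·(2^k + 2^(h+1) - 1)` states (and `m = 2n` transitions), partition refinement on
the family `(C_k)` is `Ω((m+n)·log n)`. -/
theorem layered_bisplitter_lower_bound
    (k : ℕ) (hk : 1 < k) :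
    (k - 1) * 2 ^ (2 * k - 1) ≤ IRC (layered k) ∧
    Fintype.card (CState k) = 2 ^ k * (2 ^ k + 2 ^ (treeHeight k + 1) - 1) := by
  exact ⟨IRC_layered_bound hk, card_CState k⟩
end

section
/- For every n > 2, the sequential splitter D_n has a unique valid refinement sequence, namely Π = (π_1, …, π_{n−1}) where π_i = { {1, …, n−i} } ∪ { {j} : n−i < j ≤ n } for 1 ≤ i ≤ n−1; in particular this sequence consists of n−1 partitions. -/
/-! ### Helper lemmas for the sequential splitter -/

section SeqHelpers

variable {n : ℕ}

lemma fin_val_mk {m : ℕ} (h : m < n) : ((⟨m, h⟩ : Fin n) : ℕ) = m := rfl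

/-- The unique successor function of `D_n`. -/
def dNxt (n : ℕ) (s : Fin n) : Fin n :=
  if h : s.val + 1 < n then ⟨s.val + 1, h⟩ else s

lemma seq_tr_iff (s t : Fin n) (a : Unit) :
    (seqSplitter n).tr s a t ↔ t = dNxt n s := by
  simp only [seqSplitter, dNxt]
  split <;> rfl

lemma dNxt_val_of_lt {s : Fin n} (h : s.val + 1 < n) : (dNxt n s).val = s.val + 1 := by
  simp [dNxt, h]

/-- The big block of `dPart n i`. -/
abbrev dBig (n i : ℕ) : Finset (Fin n) := Finset.univ.filter fun s => s.val + i < n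

lemma mem_dBig {i : ℕ} {s : Fin n} : s ∈ dBig n i ↔ s.val + i < n := by
  simp [dBig]

lemma mem_dPart {B : Finset (Fin n)} {i : ℕ} :
    B ∈ dPart n i ↔ B = dBig n i ∨ ∃ s : Fin n, n ≤ s.val + i ∧ B = {s} := by
  simp [dPart, dBig, eq_comm]

lemma inSameBlock_dPart {i : ℕ} {s t : Fin n} :
    inSameBlock (dPart n i) s t ↔ (s.val + i < n ∧ t.val + i < n) ∨ s = t := by
  constructor
  · rintro ⟨B, hB, hs, ht⟩
    rcases mem_dPart.1 hB with rfl | ⟨u, hu, rfl⟩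
    · exact Or.inl ⟨mem_dBig.1 hs, mem_dBig.1 ht⟩
    · rw [Finset.mem_singleton] at hs ht
      exact Or.inr (hs.trans ht.symm)
  · rintro (⟨hs, ht⟩ | rfl)
    · exact ⟨dBig n i, mem_dPart.2 (Or.inl rfl), mem_dBig.2 hs, mem_dBig.2 ht⟩
    · by_cases h : s.val + i < n
      · exact ⟨dBig n i, mem_dPart.2 (Or.inl rfl), mem_dBig.2 h, mem_dBig.2 h⟩
      · exact ⟨{s}, mem_dPart.2 (Or.inr ⟨s, by omega, rfl⟩), by simp, by simp⟩

lemma isBlockPartition_dPart {i : ℕ} (hi : i < n) : IsBlockPartition (dPart n i) := by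
  refine ⟨?_, ?_, ?_⟩
  · intro h
    rcases mem_dPart.1 h with h | ⟨s, _, h⟩
    · have h0 : (⟨0, by omega⟩ : Fin n) ∈ dBig n i := mem_dBig.2 (by rw [fin_val_mk]; omega)
      rw [← h] at h0
      simp at h0
    · exact absurd h.symm (Finset.singleton_ne_empty s)
  · intro B hB B' hB' hne
    rcases mem_dPart.1 hB with rfl | ⟨u, hu, rfl⟩ <;>
      rcases mem_dPart.1 hB' with rfl | ⟨v, hv, rfl⟩
    · exact absurd rfl hne
    · rw [Finset.disjoint_singleton_right, mem_dBig]
      omega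
    · rw [Finset.disjoint_singleton_left, mem_dBig]
      omega
    · rw [Finset.disjoint_singleton_right, Finset.mem_singleton]
      rintro rfl; exact hne rfl
  · intro s
    by_cases h : s.val + i < n
    · exact ⟨dBig n i, mem_dPart.2 (Or.inl rfl), mem_dBig.2 h⟩
    · exact ⟨{s}, mem_dPart.2 (Or.inr ⟨s, by omega, rfl⟩), by simp⟩

lemma block_eq {π : Finset (Finset (Fin n))} (hp : IsBlockPartition π)
    {B C : Finset (Fin n)} (hB : B ∈ π) (hC : C ∈ π) {s : Fin n}
    (hsB : s ∈ B) (hsC : s ∈ C) : B = C := by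
  by_contra h
  exact Finset.disjoint_left.1 (hp.2.1 B hB C hC h) hsB hsC

lemma dPart_one (hn : 2 < n) : dPart n 1 = (seqSplitter n).init := by
  have h1 : (Finset.univ.filter fun s : Fin n => n ≤ s.val + 1)
      = {(⟨n - 1, by omega⟩ : Fin n)} := by
    ext s
    simp only [Finset.mem_filter, Finset.mem_univ, true_and, Finset.mem_singleton]
    constructor
    · intro h
      exact Fin.ext (show s.val = n - 1 by omega)
    · rintro rfl
      show n ≤ n - 1 + 1
      omega
  have h2 : (Finset.univ.filter fun s : Fin n => s.val + 1 = n)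
      = {(⟨n - 1, by omega⟩ : Fin n)} := by
    ext s
    simp only [Finset.mem_filter, Finset.mem_univ, true_and, Finset.mem_singleton]
    constructor
    · intro h
      exact Fin.ext (show s.val = n - 1 by omega)
    · rintro rfl
      show n - 1 + 1 = n
      omega
  rw [dPart, h1, Finset.image_singleton, ← Finset.insert_eq]
  show _ = ({Finset.univ.filter fun s : Fin n => s.val + 1 < n,
    Finset.univ.filter fun s : Fin n => s.val + 1 = n} : Finset (Finset (Fin n)))
  rw [h2]

lemma valid_step (hn : 2 < n) {i : ℕ} (hi1 : 1 ≤ i) (hi2 : i ≤ n - 2) :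
    ValidRefinement (seqSplitter n) (dPart n i) (dPart n (i + 1)) := by
  refine ⟨?_, ?_, ?_⟩
  · intro B' hB'
    rcases mem_dPart.1 hB' with rfl | ⟨s, hs, rfl⟩
    · refine ⟨dBig n i, mem_dPart.2 (Or.inl rfl), ?_⟩
      intro u hu
      rw [mem_dBig] at hu ⊢
      omega
    · by_cases h : n ≤ s.val + i
      · exact ⟨{s}, mem_dPart.2 (Or.inr ⟨s, h, rfl⟩), subset_rfl⟩
      · refine ⟨dBig n i, mem_dPart.2 (Or.inl rfl), ?_⟩
        rw [Finset.singleton_subset_iff, mem_dBig]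
        omega
  · intro h
    have hmem : ({(⟨n - 1 - i, by omega⟩ : Fin n)} : Finset (Fin n)) ∈ dPart n (i + 1) :=
      mem_dPart.2 (Or.inr ⟨_, show n ≤ n - 1 - i + (i + 1) by omega, rfl⟩)
    rw [h] at hmem
    rcases mem_dPart.1 hmem with h0 | ⟨u, hu, h0⟩
    · have h1 : (⟨0, by omega⟩ : Fin n) ∈ dBig n i := mem_dBig.2 (by rw [fin_val_mk]; omega)
      rw [← h0, Finset.mem_singleton] at h1
      have h2 : (0 : ℕ) = n - 1 - i := congrArg Fin.val h1
      omega
    · rw [Finset.singleton_inj] at h0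
      have h2 : n - 1 - i = u.val := congrArg Fin.val h0
      omega
  · intro s t hnot
    by_cases hst : inSameBlock (dPart n i) s t
    swap
    · exact Or.inl hst
    rcases inSameBlock_dPart.1 hst with ⟨hs, ht⟩ | rfl
    swap
    · exfalso
      obtain ⟨B, hB, hsB⟩ := (isBlockPartition_dPart (show i + 1 < n by omega)).2.2 s
      exact hnot ⟨B, hB, hsB, hsB⟩
    have hne : s ≠ t := by rintro rfl; exact hnot (inSameBlock_dPart.2 (Or.inr rfl))
    rw [inSameBlock_dPart] at hnot
    push_neg at hnot
    have hnb := hnot.1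
    by_cases hsc : s.val + (i + 1) < n
    · -- t is the leaving state
      have htc : ¬ t.val + (i + 1) < n := by have := hnb hsc; omega
      right; left
      have hsn : s.val + 1 < n := by omega
      refine ⟨(), ⟨s.val + 1, hsn⟩, (seq_tr_iff _ _ _).2 (Fin.ext (dNxt_val_of_lt hsn).symm), ?_⟩
      intro t' htr
      rw [seq_tr_iff] at htr; subst htr
      have htn : t.val + 1 < n := by omega
      rw [inSameBlock_dPart]
      rintro (⟨h1, h2⟩ | heq)
      · rw [dNxt_val_of_lt htn] at h2; omega
      · have h3 : s.val + 1 = (dNxt n t).val := congrArg Fin.val heq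
        rw [dNxt_val_of_lt htn] at h3
        omega
    · -- s is the leaving state
      have htc : t.val + (i + 1) < n := by
        by_contra h
        exact hne (Fin.ext (by omega))
      right; right
      have htn : t.val + 1 < n := by omega
      refine ⟨(), ⟨t.val + 1, htn⟩, (seq_tr_iff _ _ _).2 (Fin.ext (dNxt_val_of_lt htn).symm), ?_⟩
      intro s' hsr
      rw [seq_tr_iff] at hsr; subst hsr
      have hsn : s.val + 1 < n := by omega
      rw [inSameBlock_dPart]
      rintro (⟨h1, h2⟩ | heq)
      · rw [dNxt_val_of_lt hsn] at h2; omega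
      · have h3 : t.val + 1 = (dNxt n s).val := congrArg Fin.val heq
        rw [dNxt_val_of_lt hsn] at h3
        omega

lemma dPart_last_blocks (hn : 2 < n) {B : Finset (Fin n)} (hB : B ∈ dPart n (n - 1)) :
    ∃ s, B = {s} := by
  rcases mem_dPart.1 hB with rfl | ⟨s, _, rfl⟩
  · refine ⟨⟨0, by omega⟩, ?_⟩
    ext s
    rw [mem_dBig, Finset.mem_singleton]
    constructor
    · intro h
      exact Fin.ext (show s.val = 0 by omega)
    · rintro rfl
      show 0 + (n - 1) < n
      omega
  · exact ⟨s, rfl⟩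

lemma stable_last (hn : 2 < n) : IsStablePartition (seqSplitter n) (dPart n (n - 1)) := by
  intro B hB C hC a
  obtain ⟨s, rfl⟩ := dPart_last_blocks hn hB
  by_cases h : ReachesSet (seqSplitter n) s a C
  · left; intro u hu; rw [Finset.mem_singleton] at hu; subst hu; exact h
  · right; intro u hu; rw [Finset.mem_singleton] at hu; subst hu; exact h

lemma not_stable (hn : 2 < n) {i : ℕ} (hi1 : 1 ≤ i) (hi2 : i ≤ n - 2) :
    ¬ IsStablePartition (seqSplitter n) (dPart n i) := by
  intro h
  have hB : dBig n i ∈ dPart n i := mem_dPart.2 (Or.inl rfl)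
  have hlt : n - 1 - i < n := by omega
  set c0 : Fin n := ⟨n - 1 - i, hlt⟩ with hc0
  rcases h _ hB _ hB () with h1 | h2
  · have hc : c0 ∈ dBig n i := mem_dBig.2 (show n - 1 - i + i < n by omega)
    obtain ⟨t, htB, htr⟩ := h1 _ hc
    rw [seq_tr_iff] at htr; subst htr
    have hval : (dNxt n c0).val = n - 1 - i + 1 :=
      dNxt_val_of_lt (show n - 1 - i + 1 < n by omega)
    rw [mem_dBig, hval] at htB
    omega
  · have h0 : (⟨0, by omega⟩ : Fin n) ∈ dBig n i := mem_dBig.2 (show 0 + i < n by omega)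
    refine h2 _ h0 ⟨⟨1, by omega⟩, mem_dBig.2 (show 1 + i < n by omega), ?_⟩
    rw [seq_tr_iff]
    refine Fin.ext ?_
    rw [dNxt_val_of_lt (show (0 : ℕ) + 1 < n by omega)]

lemma unique_step (hn : 2 < n) {i : ℕ} (hi1 : 1 ≤ i) (hi2 : i ≤ n - 2)
    {π' : Finset (Finset (Fin n))} (hp : IsBlockPartition π')
    (hvr : ValidRefinement (seqSplitter n) (dPart n i) π') : π' = dPart n (i + 1) := by
  obtain ⟨href, hne, hcond⟩ := hvr
  have hlt : n - 1 - i < n := by omega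
  set c : Fin n := ⟨n - 1 - i, hlt⟩ with hcdef
  -- no split witness between two states that both stay in the next big block
  have key : ∀ u v : Fin n, u.val + (i + 1) < n → v.val + (i + 1) < n →
      ¬ SplitWitness (seqSplitter n) (dPart n i) u v := by
    rintro u v hu hv ⟨a, s', htr, hw⟩
    rw [seq_tr_iff] at htr; subst htr
    refine hw (dNxt n v) ((seq_tr_iff _ _ _).2 rfl) ?_
    refine inSameBlock_dPart.2 (Or.inl ⟨?_, ?_⟩)
    · rw [dNxt_val_of_lt (by omega)]; omega
    · rw [dNxt_val_of_lt (by omega)]; omega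
  have stepA : ∀ s t : Fin n, s.val + (i + 1) < n → t.val + (i + 1) < n →
      inSameBlock π' s t := by
    intro s t hs ht
    by_contra hnot
    rcases hcond s t hnot with h | h | h
    · exact h (inSameBlock_dPart.2 (Or.inl ⟨by omega, by omega⟩))
    · exact key s t hs ht h
    · exact key t s ht hs h
  -- blocks of singleton states
  have hsing : ∀ s : Fin n, n ≤ s.val + i → ∀ B ∈ π', s ∈ B → B = {s} := by
    intro s hs B hB hsB
    obtain ⟨D, hD, hBD⟩ := href B hB
    rcases mem_dPart.1 hD with rfl | ⟨u, hu, rfl⟩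
    · have := mem_dBig.1 (hBD hsB)
      omega
    · have hsu : s = u := Finset.mem_singleton.1 (hBD hsB)
      subst hsu
      exact Finset.Subset.antisymm hBD (Finset.singleton_subset_iff.2 hsB)
  obtain ⟨C0, hC0, h0C⟩ := hp.2.2 (⟨0, by omega⟩ : Fin n)
  have hsubB : C0 ⊆ dBig n i := by
    obtain ⟨D, hD, hCD⟩ := href C0 hC0
    rcases mem_dPart.1 hD with rfl | ⟨u, hu, rfl⟩
    · exact hCD
    · have h1 : (0 : ℕ) = u.val := congrArg Fin.val (Finset.mem_singleton.1 (hCD h0C))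
      omega
  have hBig' : dBig n (i + 1) ⊆ C0 := by
    intro t ht
    rw [mem_dBig] at ht
    obtain ⟨B, hB, h0B, htB⟩ := stepA ⟨0, by omega⟩ t (show 0 + (i + 1) < n by omega) ht
    rwa [block_eq hp hC0 hB h0C h0B]
  by_cases hcC : c ∈ C0
  · exfalso
    apply hne
    have hC0eq : C0 = dBig n i := by
      refine Finset.Subset.antisymm hsubB ?_
      intro t ht
      rw [mem_dBig] at ht
      by_cases h : t.val + (i + 1) < n
      · exact hBig' (mem_dBig.2 h)
      · have : t = c := Fin.ext (show t.val = n - 1 - i by omega)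
        rw [this]; exact hcC
    ext B
    constructor
    · intro hB
      have hBne : B.Nonempty := Finset.nonempty_iff_ne_empty.2 (fun h => hp.1 (h ▸ hB))
      obtain ⟨s, hsB⟩ := hBne
      by_cases h : n ≤ s.val + i
      · rw [hsing s h B hB hsB]
        exact mem_dPart.2 (Or.inr ⟨s, h, rfl⟩)
      · have hsC0 : s ∈ C0 := by
          rw [hC0eq, mem_dBig]; omega
        rw [block_eq hp hB hC0 hsB hsC0, hC0eq]
        exact mem_dPart.2 (Or.inl rfl)
    · intro hB
      rcases mem_dPart.1 hB with rfl | ⟨s, hs, rfl⟩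
      · rw [← hC0eq]; exact hC0
      · obtain ⟨B, hB', hsB⟩ := hp.2.2 s
        rw [← hsing s hs B hB' hsB]
        exact hB'
  · have hC0eq : C0 = dBig n (i + 1) := by
      refine Finset.Subset.antisymm ?_ hBig'
      intro t ht
      have htB := mem_dBig.1 (hsubB ht)
      rw [mem_dBig]
      by_contra h
      have hteq : t = c := Fin.ext (show t.val = n - 1 - i by omega)
      exact hcC (hteq ▸ ht)
    have hcblock : ∀ B ∈ π', c ∈ B → B = {c} := by
      intro B hB hcB
      obtain ⟨D, hD, hBD⟩ := href B hB
      rcases mem_dPart.1 hD with rfl | ⟨u, hu, rfl⟩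
      swap
      · have h1 : n - 1 - i = u.val := congrArg Fin.val (Finset.mem_singleton.1 (hBD hcB))
        omega
      refine Finset.Subset.antisymm ?_ (Finset.singleton_subset_iff.2 hcB)
      intro t htB
      have h1 := mem_dBig.1 (hBD htB)
      rw [Finset.mem_singleton]
      by_contra hne2
      have hne3 : t.val ≠ n - 1 - i := fun h => hne2 (Fin.ext h)
      have htC0 : t ∈ C0 := hBig' (mem_dBig.2 (by omega))
      exact hcC (block_eq hp hB hC0 htB htC0 ▸ hcB)
    ext B
    constructor
    · intro hB
      have hBne : B.Nonempty := Finset.nonempty_iff_ne_empty.2 (fun h => hp.1 (h ▸ hB))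
      obtain ⟨s, hsB⟩ := hBne
      by_cases h1 : n ≤ s.val + i
      · rw [hsing s h1 B hB hsB]
        exact mem_dPart.2 (Or.inr ⟨s, by omega, rfl⟩)
      by_cases h2 : s = c
      · subst h2
        rw [hcblock B hB hsB]
        exact mem_dPart.2 (Or.inr ⟨c, show n ≤ n - 1 - i + (i + 1) by omega, rfl⟩)
      · have hsv : s.val ≠ n - 1 - i := fun h => h2 (Fin.ext h)
        have hsC0 : s ∈ C0 := hBig' (mem_dBig.2 (by omega))
        rw [block_eq hp hB hC0 hsB hsC0, hC0eq]
        exact mem_dPart.2 (Or.inl rfl)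
    · intro hB
      rcases mem_dPart.1 hB with rfl | ⟨s, hs, rfl⟩
      · rw [← hC0eq]; exact hC0
      · by_cases h : s = c
        · subst h
          obtain ⟨B, hB', hsB⟩ := hp.2.2 c
          rw [← hcblock B hB' hsB]
          exact hB'
        · have hsv : s.val ≠ n - 1 - i := fun hh => h (Fin.ext hh)
          have h1 : n ≤ s.val + i := by omega
          obtain ⟨B, hB', hsB⟩ := hp.2.2 s
          rw [← hsing s h1 B hB' hsB]
          exact hB'

lemma no_refine_last (hn : 2 < n) {π' : Finset (Finset (Fin n))} (hp : IsBlockPartition π')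
    (hvr : ValidRefinement (seqSplitter n) (dPart n (n - 1)) π') : False := by
  obtain ⟨href, hne, _⟩ := hvr
  apply hne
  ext B
  constructor
  · intro hB
    obtain ⟨D, hD, hBD⟩ := href B hB
    obtain ⟨u, rfl⟩ := dPart_last_blocks hn hD
    have hBne : B.Nonempty := Finset.nonempty_iff_ne_empty.2 (fun h => hp.1 (h ▸ hB))
    obtain ⟨s, hsB⟩ := hBne
    have hsu : s = u := Finset.mem_singleton.1 (hBD hsB)
    subst hsu
    rw [Finset.Subset.antisymm hBD (Finset.singleton_subset_iff.2 hsB)]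
    exact hD
  · intro hB
    obtain ⟨u, rfl⟩ := dPart_last_blocks hn hB
    obtain ⟨B, hB', huB⟩ := hp.2.2 u
    obtain ⟨D, hD, hBD⟩ := href B hB'
    obtain ⟨v, rfl⟩ := dPart_last_blocks hn hD
    have huv : u = v := Finset.mem_singleton.1 (hBD huB)
    subst huv
    rw [← Finset.Subset.antisymm hBD (Finset.singleton_subset_iff.2 huB)]
    exact hB'

end SeqHelpers

/-- For n > 2, the sequential splitter `D_n` has a unique valid refinement
sequence, namely `(π_1, …, π_{n-1})` with `π_i = {{1,…,n-i}} ∪ {{j} : n-i < j ≤ n}`;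
in particular it consists of `n-1` partitions, i.e. `n-2` refinement steps. -/
theorem sequential_splitter_unique_valid_sequence
    (n : ℕ) (hn : 2 < n) :
    ValidRefinementSeq (seqSplitter n) (n - 2) (fun j => dPart n (j + 1)) ∧
    ∀ (m : ℕ) (seq : ℕ → Finset (Finset (Fin n))),
      ValidRefinementSeq (seqSplitter n) m seq →
      m = n - 2 ∧ ∀ j ≤ m, seq j = dPart n (j + 1) := by
  have hex : ValidRefinementSeq (seqSplitter n) (n - 2) (fun j => dPart n (j + 1)) := by
    refine ⟨dPart_one hn, ?_, ?_, ?_⟩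
    · intro i hi
      exact isBlockPartition_dPart (by omega)
    · intro i hi
      exact valid_step hn (i := i + 1) (by omega) (by omega)
    · show IsStablePartition (seqSplitter n) (dPart n (n - 2 + 1))
      have h3 : n - 2 + 1 = n - 1 := by omega
      rw [h3]
      exact stable_last hn
  refine ⟨hex, ?_⟩
  intro m seq hseq
  obtain ⟨h0, hpart, hstep, hstable⟩ := hseq
  have key : ∀ j, j ≤ m → j ≤ n - 2 → seq j = dPart n (j + 1) := by
    intro j
    induction j with
    | zero =>
      intro _ _
      show seq 0 = dPart n 1
      rw [h0, ← dPart_one hn]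
    | succ j ih =>
      intro hjm hjn
      have h1 := ih (by omega) (by omega)
      have h2 := hstep j (by omega)
      rw [h1] at h2
      exact unique_step hn (i := j + 1) (by omega) (by omega) (hpart (j + 1) hjm) h2
  have hm : m = n - 2 := by
    rcases Nat.lt_trichotomy m (n - 2) with h | h | h
    · have heq := key m le_rfl (by omega)
      rw [heq] at hstable
      exact absurd hstable (not_stable hn (by omega) (by omega))
    · exact h
    · exfalso
      have heq := key (n - 2) (by omega) le_rfl
      have h2 := hstep (n - 2) h
      rw [heq] at h2
      have h3 : n - 2 + 1 = n - 1 := by omega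
      rw [h3] at h2
      exact no_refine_last hn (by rw [← h3] at *; exact hpart (n - 2 + 1) (by omega)) h2
  exact ⟨hm, fun j hj => key j hj (by omega)⟩
end

section
/- For every k ≥ 1, let G_k be the single-action LTS with states {a_0, …, a_{2^k−1}} ∪ {b_0, …, b_{k−1}}, transitions a_i → b_j exactly when the j-th bit of the binary representation of i equals 1, and initial partition π_init = { {a_0, …, a_{2^k−1}} } ∪ { {b_j} : 0 ≤ j < k }. Then the pair (π_init, π_final), where π_final is the partition of all states into singletons, is a valid refinement sequence for G_k; hence PIRC(G_k) = 1. -/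
-- auxiliary lemmas to be inserted above the theorem

section GAux

variable {k : ℕ}

lemma mem_gInit {B : Finset (Fin (2 ^ k) ⊕ Fin k)} :
    B ∈ (gLTS k).init ↔
      B = Finset.univ.filter (fun s => s.isLeft = true) ∨ ∃ j : Fin k, B = {Sum.inr j} := by
  show B ∈ {Finset.univ.filter fun s => s.isLeft = true} ∪
      Finset.univ.image (fun j : Fin k => ({Sum.inr j} : Finset (Fin (2 ^ k) ⊕ Fin k))) ↔ _
  simp only [Finset.mem_union, Finset.mem_singleton, Finset.mem_image, Finset.mem_univ, true_and]
  constructor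
  · rintro (h | ⟨j, h⟩)
    · exact Or.inl h
    · exact Or.inr ⟨j, h.symm⟩
  · rintro (h | ⟨j, h⟩)
    · exact Or.inl h
    · exact Or.inr ⟨j, h.symm⟩

lemma not_same_inr {j j' : Fin k} (h : j ≠ j') :
    ¬ inSameBlock (gLTS k).init (Sum.inr j) (Sum.inr j') := by
  rintro ⟨B, hB, hj, hj'⟩
  rcases mem_gInit.mp hB with rfl | ⟨j'', rfl⟩
  · simp at hj
  · simp only [Finset.mem_singleton, Sum.inr.injEq] at hj hj'
    exact h (hj.trans hj'.symm)

lemma gSingletons_partition :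
    IsBlockPartition (Finset.univ.image fun s : Fin (2 ^ k) ⊕ Fin k => ({s} : Finset _)) := by
  refine ⟨by simp, ?_, fun s => ⟨{s}, by simp⟩⟩
  rintro B hB B' hB' hne
  simp only [Finset.mem_image] at hB hB'
  obtain ⟨s, -, rfl⟩ := hB
  obtain ⟨t, -, rfl⟩ := hB'
  simp only [Finset.disjoint_singleton_left, Finset.mem_singleton]
  intro h; exact hne (by rw [h])

lemma gInit_partition (hk : 1 ≤ k) : IsBlockPartition (gLTS k).init := by
  refine ⟨?_, ?_, ?_⟩
  · intro h
    rcases mem_gInit.mp h with h | ⟨j, h⟩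
    · have : (Sum.inl ⟨0, by positivity⟩ : Fin (2 ^ k) ⊕ Fin k) ∈ (∅ : Finset _) := by
        rw [h]; simp
      simp at this
    · exact Finset.singleton_ne_empty _ h.symm
  · intro B hB B' hB' hne
    rcases mem_gInit.mp hB with rfl | ⟨j, rfl⟩ <;> rcases mem_gInit.mp hB' with rfl | ⟨j', rfl⟩
    · exact absurd rfl hne
    · simp [Finset.disjoint_singleton_right]
    · simp [Finset.disjoint_singleton_left]
    · simp only [Finset.disjoint_singleton_left, Finset.mem_singleton]
      intro h; exact hne (by rw [h])
  · rintro (i | j)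
    · exact ⟨_, mem_gInit.mpr (Or.inl rfl), by simp⟩
    · exact ⟨{Sum.inr j}, mem_gInit.mpr (Or.inr ⟨j, rfl⟩), by simp⟩

lemma gSplit {i i' : Fin (2 ^ k)} {j : ℕ} (hjk : j < k)
    (hi : Nat.testBit i.val j = true) (hi' : Nat.testBit i'.val j = false) :
    SplitWitness (gLTS k) (gLTS k).init (Sum.inl i) (Sum.inl i') := by
  refine ⟨(), Sum.inr ⟨j, hjk⟩, ⟨i, ⟨j, hjk⟩, rfl, rfl, hi⟩, ?_⟩
  rintro t' ⟨i'', j', hi'', rfl, hbit⟩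
  injection hi'' with h
  subst h
  refine not_same_inr fun h => ?_
  rw [← h] at hbit
  simp only [Fin.val_mk] at hbit
  rw [hi'] at hbit
  exact Bool.noConfusion hbit

end GAux
lemma not_same_mixed {k : ℕ} {i : Fin (2 ^ k)} {j : Fin k} :
    ¬ inSameBlock (gLTS k).init (Sum.inl i) (Sum.inr j) := by
  rintro ⟨B, hB, h1, h2⟩
  rcases mem_gInit.mp hB with rfl | ⟨j', rfl⟩
  · simp at h2
  · simp at h1

/-- For k ≥ 1, the pair `(π_init, π_final)` with `π_final` the partition into
singletons is a valid refinement sequence for `G_k`; hence `PIRC(G_k) = 1`. -/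
theorem fast_parallel_example_has_parallel_cost_one
    (k : ℕ) (hk : 1 ≤ k) :
    ValidRefinementSeq (gLTS k) 1
      (fun i => if i = 0 then (gLTS k).init
        else Finset.univ.image fun s : Fin (2 ^ k) ⊕ Fin k => ({s} : Finset (Fin (2 ^ k) ⊕ Fin k))) ∧
    PIRC (gLTS k) = 1 := by
  have h2k : 1 < 2 ^ k := Nat.one_lt_two_pow_iff.mpr (by omega)
  set π₁ : Finset (Finset (Fin (2 ^ k) ⊕ Fin k)) :=
    Finset.univ.image fun s : Fin (2 ^ k) ⊕ Fin k => ({s} : Finset _) with hπ₁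
  have hsing : ∀ s t : Fin (2 ^ k) ⊕ Fin k, inSameBlock π₁ s t ↔ s = t := by
    intro s t
    constructor
    · rintro ⟨B, hB, h1, h2⟩
      simp only [hπ₁, Finset.mem_image] at hB
      obtain ⟨u, -, rfl⟩ := hB
      simp only [Finset.mem_singleton] at h1 h2
      rw [h1, h2]
    · rintro rfl; exact ⟨{s}, by simp [hπ₁], by simp, by simp⟩
  have hvalid : ValidRefinementSeq (gLTS k) 1
      (fun i => if i = 0 then (gLTS k).init else π₁) := by
    refine ⟨by simp, ?_, ?_, ?_⟩
    · intro i hi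
      by_cases h : i = 0
      · simpa [h] using gInit_partition hk
      · simpa [h] using gSingletons_partition (k := k)
    · intro i hi
      have hi0 : i = 0 := by omega
      subst hi0
      norm_num
      refine ⟨?_, ?_, ?_⟩
      · intro B' hB'
        simp only [hπ₁, Finset.mem_image] at hB'
        obtain ⟨s, -, rfl⟩ := hB'
        obtain ⟨B, hB, hs⟩ := (gInit_partition hk).2.2 s
        exact ⟨B, hB, by simpa using hs⟩
      · intro h
        have hA : (Finset.univ.filter fun s : Fin (2 ^ k) ⊕ Fin k => s.isLeft = true) ∈ π₁ := by
          rw [h]; exact mem_gInit.mpr (Or.inl rfl)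
        simp only [hπ₁, Finset.mem_image] at hA
        obtain ⟨s, -, hs⟩ := hA
        have m0 : (Sum.inl ⟨0, by positivity⟩ : Fin (2 ^ k) ⊕ Fin k) ∈ ({s} : Finset _) := by
          rw [hs]; simp
        have m1 : (Sum.inl ⟨1, h2k⟩ : Fin (2 ^ k) ⊕ Fin k) ∈ ({s} : Finset _) := by
          rw [hs]; simp
        simp only [Finset.mem_singleton] at m0 m1
        rw [← m0] at m1
        simp [Fin.ext_iff] at m1
      · intro s t hnot
        rw [hsing] at hnot
        match s, t with
        | Sum.inl i, Sum.inl i' =>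
          have hne : i.val ≠ i'.val := fun h => hnot (by rw [Fin.ext h])
          have hdiff : ∃ j, Nat.testBit i.val j ≠ Nat.testBit i'.val j := by
            by_contra h
            push_neg at h
            exact hne (Nat.eq_of_testBit_eq h)
          obtain ⟨j, hj⟩ := hdiff
          have hjk : j < k := by
            by_contra h
            push_neg at h
            have e1 : Nat.testBit i.val j = false :=
              Nat.testBit_lt_two_pow (lt_of_lt_of_le i.isLt (Nat.pow_le_pow_right (by norm_num) h))
            have e2 : Nat.testBit i'.val j = false :=
              Nat.testBit_lt_two_pow (lt_of_lt_of_le i'.isLt (Nat.pow_le_pow_right (by norm_num) h))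
            rw [e1, e2] at hj; exact hj rfl
          cases hb : Nat.testBit i.val j <;> cases hb' : Nat.testBit i'.val j
          · exact absurd (hb.trans hb'.symm) hj
          · exact Or.inr (Or.inr (gSplit hjk hb' hb))
          · exact Or.inr (Or.inl (gSplit hjk hb hb'))
          · exact absurd (hb.trans hb'.symm) hj
        | Sum.inl i, Sum.inr j => exact Or.inl not_same_mixed
        | Sum.inr j, Sum.inl i =>
          exact Or.inl fun ⟨B, hB, h1, h2⟩ => not_same_mixed ⟨B, hB, h2, h1⟩
        | Sum.inr j, Sum.inr j' =>
          exact Or.inl (not_same_inr fun h => hnot (by rw [h]))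
    · simp only [if_neg one_ne_zero]
      intro B hB C hC
      simp only [hπ₁, Finset.mem_image] at hB
      obtain ⟨s, -, rfl⟩ := hB
      intro a
      by_cases h : ReachesSet (gLTS k) s a C
      · left; intro x hx; rw [Finset.mem_singleton] at hx; rwa [hx]
      · right; intro x hx; rw [Finset.mem_singleton] at hx; rwa [hx]
  refine ⟨hvalid, ?_⟩
  have h1mem : 1 ∈ {n | ∃ seq, ValidRefinementSeq (gLTS k) n seq} := ⟨_, hvalid⟩
  have h0 : 0 ∉ {n | ∃ seq, ValidRefinementSeq (gLTS k) n seq} := by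
    rintro ⟨seq, h0eq, -, -, hstable⟩
    rw [h0eq] at hstable
    have hA : (Finset.univ.filter fun s : Fin (2 ^ k) ⊕ Fin k => s.isLeft = true) ∈ (gLTS k).init :=
      mem_gInit.mpr (Or.inl rfl)
    have hB : ({Sum.inr ⟨0, hk⟩} : Finset (Fin (2 ^ k) ⊕ Fin k)) ∈ (gLTS k).init :=
      mem_gInit.mpr (Or.inr ⟨⟨0, hk⟩, rfl⟩)
    rcases hstable _ hA _ hB () with h | h
    · have := h (Sum.inl ⟨0, by positivity⟩) (by simp)
      obtain ⟨t, ht, i', j', hi, rfl, hbit⟩ := this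
      have : i'.val = 0 := by
        injection hi with h'
        rw [← h']
      rw [this] at hbit
      simp at hbit
    · refine h (Sum.inl ⟨1, h2k⟩) (by simp) ?_
      exact ⟨Sum.inr ⟨0, hk⟩, by simp, ⟨1, h2k⟩, ⟨0, hk⟩, rfl, rfl, by norm_num [Nat.testBit_zero]⟩
  have hle := Nat.sInf_le h1mem
  have hne : sInf {n | ∃ seq, ValidRefinementSeq (gLTS k) n seq} ≠ 0 := by
    intro h
    rcases Nat.sInf_eq_zero.mp h with h' | h'
    · exact h0 h'
    · rw [h'] at h1mem; simp at h1mem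
  simp only [PIRC]
  omega
end
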